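/- arXiv:2501.03644 — 6 statements merged into one kernel-verified Lean document; each statement's English description precedes it below -/
import Mathlib

section
/- Let $p > 3$ be a prime and $f \ge 1$. Let $\underline a = (a_0,\dots,a_{f-1})$ and $\underline b = (b_0,\dots,b_{f-1})$ be tuples of integers such that $a_j \in \{-1,0,1\}$ for all $j$, $\sum_{j=0}^{f-1} |a_j| \ge \sum_{j=0}^{f-1} |b_j|$, and $\sum_{j=0}^{f-1} a_j p^j \equiv \sum_{j=0}^{f-1} b_j p^j \pmod{p^f - 1}$. Then $\underline a = \underline b$. -/
open Finset

private lemma key_ineq (q x y A B : ℤ) (hq : 5 ≤ q) (hA : |A| ≤ 1)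
    (ht : B - A = q * y - x) :
    q * |y| - |x| - (if y = 0 then 0 else 2) ≤ |B| - |A| := by
  have h1 : |B - A| - |A| ≤ |B| := by
    have h := abs_sub_abs_le_abs_sub (B - A) B
    have h2 : |(B - A) - B| = |A| := by rw [show (B - A) - B = -A by ring, abs_neg]
    linarith
  by_cases hy : y = 0
  · simp only [hy, if_true, abs_zero, mul_zero]
    by_cases hx : x = 0
    · have hBA : B = A := by rw [hy, hx] at ht; simp at ht; linarith
      simp [hBA]
    · have hx1 : (1 : ℤ) ≤ |x| := Int.one_le_abs (by simpa using hx)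
      have hBA : |B - A| = |x| := by rw [ht, hy]; simp
      linarith
  · simp only [hy, if_false]
    have hle : q * |y| - |x| ≤ |B - A| := by
      rw [ht]
      have h := abs_sub_abs_le_abs_sub (q * y) x
      have hpy : |q * y| = q * |y| := by
        rw [abs_mul, abs_of_pos (by linarith : (0:ℤ) < q)]
      linarith
    linarith

/-- Lemma 4.3.3 of the paper: if `p > 3` is prime, `a j ∈ {-1,0,1}` for all `j`,
`∑ |a j| ≥ ∑ |b j|` and `∑ a j p^j ≡ ∑ b j p^j (mod p^f - 1)`, then `a = b`. -/
theorem stmt_2 (p : ℕ) (hp : p.Prime) (hp3 : 3 < p) (f : ℕ) (hf : 1 ≤ f)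
    (a b : Fin f → ℤ) (ha : ∀ j, a j ∈ ({-1, 0, 1} : Set ℤ))
    (hsum : ∑ j, |b j| ≤ ∑ j, |a j|)
    (hcong : (∑ j, a j * (p : ℤ) ^ (j : ℕ)) ≡
      (∑ j, b j * (p : ℤ) ^ (j : ℕ)) [ZMOD ((p : ℤ) ^ f - 1)]) :
    a = b := by
  have hp5n : 5 ≤ p := by
    have h4 : p ≠ 4 := by rintro rfl; norm_num at hp
    omega
  set q : ℤ := (p : ℤ) with hqdef
  have hq5 : (5 : ℤ) ≤ q := by rw [hqdef]; exact_mod_cast hp5n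
  have hq0 : q ≠ 0 := by linarith
  -- extended digit functions
  set A : ℕ → ℤ := fun j => if h : j < f then a ⟨j, h⟩ else 0 with hAdef
  set B : ℕ → ℤ := fun j => if h : j < f then b ⟨j, h⟩ else 0 with hBdef
  set t : ℕ → ℤ := fun j => B j - A j with htdef
  have hAval : ∀ j (h : j < f), A j = a ⟨j, h⟩ := fun j h => dif_pos h
  have hBval : ∀ j (h : j < f), B j = b ⟨j, h⟩ := fun j h => dif_pos h
  have hAabs : ∀ j, |A j| ≤ 1 := by
    intro j
    by_cases h : j < f
    · rw [hAval j h]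
      rcases ha ⟨j, h⟩ with h' | h' | h' <;> simp_all
    · simp only [hAdef, dif_neg h]; norm_num
  -- the congruence as a divisibility about t
  have hdvd : (q ^ f - 1) ∣ ∑ j ∈ range f, t j * q ^ j := by
    have h := hcong.dvd
    have e1 : ∑ j : Fin f, a j * q ^ (j : ℕ) = ∑ j ∈ range f, A j * q ^ j := by
      rw [← Fin.sum_univ_eq_sum_range (fun j => A j * q ^ j) f]
      exact Finset.sum_congr rfl fun j _ => by rw [hAval j j.isLt]
    have e2 : ∑ j : Fin f, b j * q ^ (j : ℕ) = ∑ j ∈ range f, B j * q ^ j := by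
      rw [← Fin.sum_univ_eq_sum_range (fun j => B j * q ^ j) f]
      exact Finset.sum_congr rfl fun j _ => by rw [hBval j j.isLt]
    rw [e1, e2] at h
    have e3 : ∑ j ∈ range f, B j * q ^ j - ∑ j ∈ range f, A j * q ^ j
        = ∑ j ∈ range f, t j * q ^ j := by
      rw [← Finset.sum_sub_distrib]
      exact Finset.sum_congr rfl fun j _ => by simp [htdef]; ring
    rwa [e3] at h
  obtain ⟨K, hK⟩ := hdvd
  -- the carry sequence u
  have hdiv : ∀ j, j ≤ f → q ^ j ∣ (K + ∑ i ∈ range j, t i * q ^ i) := by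
    intro j hj
    have hsplit : ∑ i ∈ range f, t i * q ^ i
        = ∑ i ∈ range j, t i * q ^ i + ∑ i ∈ Ico j f, t i * q ^ i :=
      (Finset.sum_range_add_sum_Ico _ hj).symm
    have e : K + ∑ i ∈ range j, t i * q ^ i
        = K * q ^ f - ∑ i ∈ Ico j f, t i * q ^ i := by
      rw [hK] at hsplit; linarith
    rw [e]
    refine dvd_sub (Dvd.dvd.mul_left (pow_dvd_pow q hj) K) (Finset.dvd_sum ?_)
    intro i hi
    exact Dvd.dvd.mul_left (pow_dvd_pow q (Finset.mem_Ico.mp hi).1) (t i)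
  set u : ℕ → ℤ := fun j => (K + ∑ i ∈ range j, t i * q ^ i) / q ^ j with hudef
  have hu : ∀ j, j ≤ f → u j * q ^ j = K + ∑ i ∈ range j, t i * q ^ i := by
    intro j hj
    exact Int.ediv_mul_cancel (hdiv j hj)
  have hu0 : u 0 = K := by simp [hudef]
  have huf : u f = K := by
    have h := hu f le_rfl
    rw [hK] at h
    have : u f * q ^ f = K * q ^ f := by linarith
    exact mul_right_cancel₀ (pow_ne_zero f hq0) this
  have hrec : ∀ j, j < f → t j = q * u (j + 1) - u j := by
    intro j hj
    have h1 := hu j (le_of_lt hj)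
    have h2 := hu (j + 1) hj
    rw [Finset.sum_range_succ] at h2
    have h3 : (q * u (j + 1) - u j) * q ^ j = t j * q ^ j := by
      have : u (j + 1) * q ^ (j + 1) = u (j+1) * q ^ j * q := by ring
      rw [pow_succ] at h2
      nlinarith [h1, h2]
    exact (mul_right_cancel₀ (pow_ne_zero j hq0) h3).symm
  -- per-index inequality
  have hterm : ∀ j ∈ range f,
      q * |u (j + 1)| - |u j| - (if u (j + 1) = 0 then 0 else 2) ≤ |B j| - |A j| := by
    intro j hj
    exact key_ineq q (u j) (u (j + 1)) (A j) (B j) hq5 (hAabs j)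
      (by rw [← hrec j (Finset.mem_range.mp hj)])
  -- the sum of |B| - |A| is ≤ 0
  have hsum' : ∑ j ∈ range f, (|B j| - |A j|) ≤ 0 := by
    have e1 : ∑ j : Fin f, |a j| = ∑ j ∈ range f, |A j| := by
      rw [← Fin.sum_univ_eq_sum_range (fun j => |A j|) f]
      exact Finset.sum_congr rfl fun j _ => by rw [hAval j j.isLt]
    have e2 : ∑ j : Fin f, |b j| = ∑ j ∈ range f, |B j| := by
      rw [← Fin.sum_univ_eq_sum_range (fun j => |B j|) f]
      exact Finset.sum_congr rfl fun j _ => by rw [hBval j j.isLt]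
    rw [Finset.sum_sub_distrib]
    rw [e1, e2] at hsum
    linarith
  -- telescoping and the final estimate
  have htel : ∑ j ∈ range f, (|u (j + 1)| - |u j|) = 0 := by
    rw [Finset.sum_range_sub (fun j => |u j|) f, hu0, huf]
    ring
  have hlow : ∀ j ∈ range f,
      2 * |u (j + 1)| ≤ (q - 1) * |u (j + 1)| - (if u (j + 1) = 0 then 0 else 2) := by
    intro j _
    by_cases h : u (j + 1) = 0
    · simp [h]
    · have h1 : (1 : ℤ) ≤ |u (j + 1)| := Int.one_le_abs (by simpa using h)
      simp only [h, if_false]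
      nlinarith
  have hmain : 2 * ∑ j ∈ range f, |u (j + 1)| ≤ 0 := by
    have h1 : ∑ j ∈ range f, (q * |u (j + 1)| - |u j| - (if u (j + 1) = 0 then 0 else 2))
        ≤ ∑ j ∈ range f, (|B j| - |A j|) := Finset.sum_le_sum hterm
    have h2 : ∑ j ∈ range f, (q * |u (j + 1)| - |u j| - (if u (j + 1) = 0 then 0 else 2))
        = ∑ j ∈ range f, ((q - 1) * |u (j + 1)| - (if u (j + 1) = 0 then 0 else 2))
          + ∑ j ∈ range f, (|u (j + 1)| - |u j|) := by
      rw [← Finset.sum_add_distrib]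
      exact Finset.sum_congr rfl fun j _ => by ring
    have h3 : ∑ j ∈ range f, 2 * |u (j + 1)|
        ≤ ∑ j ∈ range f, ((q - 1) * |u (j + 1)| - (if u (j + 1) = 0 then 0 else 2)) :=
      Finset.sum_le_sum hlow
    rw [Finset.mul_sum]
    calc ∑ j ∈ range f, 2 * |u (j + 1)|
        ≤ ∑ j ∈ range f, ((q - 1) * |u (j + 1)| - (if u (j + 1) = 0 then 0 else 2)) := h3
      _ = ∑ j ∈ range f, (q * |u (j + 1)| - |u j| - (if u (j + 1) = 0 then 0 else 2)) := by
          rw [h2, htel]; ring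
      _ ≤ ∑ j ∈ range f, (|B j| - |A j|) := h1
      _ ≤ 0 := hsum'
  -- conclude all u (j+1) = 0 for j < f
  have huzero : ∀ j ∈ range f, |u (j + 1)| = 0 := by
    have hnn : ∀ j ∈ range f, (0 : ℤ) ≤ |u (j + 1)| := fun j _ => abs_nonneg _
    have hs0 : ∑ j ∈ range f, |u (j + 1)| = 0 := by
      have := Finset.sum_nonneg hnn
      linarith
    exact fun j hj => le_antisymm (by
      have := Finset.single_le_sum hnn hj
      linarith) (abs_nonneg _)
  have hK0 : K = 0 := by
    have hf1 : f - 1 ∈ range f := Finset.mem_range.mpr (by omega)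
    have := huzero (f - 1) hf1
    rw [show f - 1 + 1 = f by omega, huf] at this
    exact abs_eq_zero.mp this
  have huall : ∀ j, j ≤ f → u j = 0 := by
    intro j hj
    rcases Nat.eq_zero_or_pos j with h0 | h0
    · rw [h0, hu0, hK0]
    · have : j - 1 ∈ range f := Finset.mem_range.mpr (by omega)
      have h := huzero (j - 1) this
      rw [show j - 1 + 1 = j by omega] at h
      exact abs_eq_zero.mp h
  funext j
  have hj : (j : ℕ) < f := j.isLt
  have := hrec j hj
  rw [huall (j + 1) hj, huall j (le_of_lt hj)] at this
  have ht0 : B (j : ℕ) = A (j : ℕ) := by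
    have : t (j : ℕ) = 0 := by rw [this]; ring
    simp only [htdef] at this
    linarith
  rw [hAval j hj, hBval j hj] at ht0
  simpa using ht0.symm
end

section
/- Let $f \ge 1$ and $1 \le d \le f$. The simplicial complex $\Delta$ on the vertex set $\{y_0,z_0,\dots,y_{f-1},z_{f-1}\}$ whose facets are the sets $\{x_0,\dots,x_{f-1}\}$ with $x_j \in \{y_j,z_j\}$ for all $j$ and $|\{j : x_j = z_j\}| < d$, is a shellable pure $(f-1)$-dimensional simplicial complex: ordering the facets so that the number of indices $j$ with $x_j = z_j$ is non-decreasing gives a shelling. -/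
open scoped Classical

/-- The facet of the complex `Δ` attached to a choice `x : Fin f → Bool`
(`x j = true` meaning `x_j = z_j`, `x j = false` meaning `x_j = y_j`). -/
def facetOf (f : ℕ) (x : Fin f → Bool) : Finset (Fin f × Bool) :=
  Finset.univ.image fun j => (j, x j)

/-- The number of `z`-vertices of a face. -/
def zCount (f : ℕ) (t : Finset (Fin f × Bool)) : ℕ :=
  (t.filter fun v => v.2).card

lemma mem_facetOf {f : ℕ} {x : Fin f → Bool} {j : Fin f} {b : Bool} :
    (j, b) ∈ facetOf f x ↔ x j = b := by
  simp [facetOf, Prod.ext_iff]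

lemma card_facetOf (f : ℕ) (x : Fin f → Bool) : (facetOf f x).card = f := by
  rw [facetOf, Finset.card_image_of_injective _ (fun a b h => (Prod.ext_iff.1 h).1),
    Finset.card_univ, Fintype.card_fin]

lemma zCount_facetOf (f : ℕ) (x : Fin f → Bool) :
    zCount f (facetOf f x) = (Finset.univ.filter fun j => x j).card := by
  unfold zCount facetOf
  rw [Finset.filter_image, Finset.card_image_of_injective _ (fun a b h => (Prod.ext_iff.1 h).1)]

/-- Proposition 4.2.3 (proof) of the paper: the pure `(f-1)`-dimensional simplicial
complex `Δ` whose facets are the sets `{x_0, …, x_{f-1}}` with `x_j ∈ {y_j, z_j}` and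
`|{j : x_j = z_j}| < d` is shellable: every enumeration of the facets that is
non-decreasing in the number of `z`-vertices is a shelling (for each `i > 0` the
intersection `⟨F_0, …, F_{i-1}⟩ ∩ ⟨F_i⟩` is generated by a nonempty set of maximal
proper faces of `F_i`). -/
theorem stmt_7 (f d : ℕ) (hf : 1 ≤ f) (hd1 : 1 ≤ d) (hdf : d ≤ f)
    (N : ℕ) (F : Fin N → Finset (Fin f × Bool))
    (hinj : Function.Injective F)
    (hrange : Set.range F =
      {t | ∃ x : Fin f → Bool, (Finset.univ.filter fun j => x j).card < d ∧
        t = facetOf f x})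
    (hmono : ∀ i j : Fin N, i ≤ j → zCount f (F i) ≤ zCount f (F j)) :
    (∀ i : Fin N, (F i).card = f) ∧
    (∀ i : Fin N, 0 < (i : ℕ) →
      (∃ t : Finset (Fin f × Bool), t ⊆ F i ∧ t.card = f - 1 ∧
        ∃ k : Fin N, k < i ∧ t ⊆ F k) ∧
      (∀ s : Finset (Fin f × Bool), s ⊆ F i → (∃ k : Fin N, k < i ∧ s ⊆ F k) →
        ∃ t : Finset (Fin f × Bool), s ⊆ t ∧ t ⊆ F i ∧ t.card = f - 1 ∧
          ∃ k : Fin N, k < i ∧ t ⊆ F k)) := by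
  have hx : ∀ i : Fin N, ∃ x : Fin f → Bool,
      (Finset.univ.filter fun j => x j).card < d ∧ F i = facetOf f x := by
    intro i
    have : F i ∈ Set.range F := ⟨i, rfl⟩
    rw [hrange] at this
    exact this
  have key : ∀ i : Fin N, 0 < (i : ℕ) →
      ∀ s : Finset (Fin f × Bool), s ⊆ F i → (∃ k : Fin N, k < i ∧ s ⊆ F k) →
      ∃ t : Finset (Fin f × Bool), s ⊆ t ∧ t ⊆ F i ∧ t.card = f - 1 ∧
        ∃ k : Fin N, k < i ∧ t ⊆ F k := by
    intro i hi s hsFi ⟨k, hki, hsFk⟩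
    obtain ⟨x, hxd, hFi⟩ := hx i
    obtain ⟨x', hx'd, hFk⟩ := hx k
    have hxx' : x ≠ x' := by
      rintro rfl
      exact Fin.ne_of_lt hki (hinj (hFi.trans hFk.symm)).symm
    have hzle : (Finset.univ.filter fun j => x' j).card ≤
        (Finset.univ.filter fun j => x j).card := by
      have := hmono k i (le_of_lt hki)
      rwa [hFi, hFk, zCount_facetOf, zCount_facetOf] at this
    -- find j0 with x j0 = true, x' j0 = false
    obtain ⟨j0, hxj0, hx'j0⟩ : ∃ j0, x j0 = true ∧ x' j0 = false := by
      by_contra h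
      push_neg at h
      have hsub : (Finset.univ.filter fun j => x j) ⊆
          (Finset.univ.filter fun j => x' j) := by
        intro j hj
        simp only [Finset.mem_filter, Finset.mem_univ, true_and] at hj ⊢
        have := h j hj
        cases hb : x' j with
        | false => exact absurd hb this
        | true => rfl
      have heq := Finset.eq_of_subset_of_card_le hsub hzle
      apply hxx'
      funext j
      have h1 := Finset.ext_iff.1 heq j
      simp only [Finset.mem_filter, Finset.mem_univ, true_and] at h1
      cases hb : x j <;> cases hb' : x' j <;> simp_all
    set x'' := Function.update x j0 false with hx''
    have hx''le : (Finset.univ.filter fun j => x'' j) ⊂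
        (Finset.univ.filter fun j => x j) := by
      constructor
      · intro j hj
        simp only [Finset.mem_filter, Finset.mem_univ, true_and] at hj ⊢
        by_cases hjj : j = j0
        · subst hjj; simp [hx'', Function.update_self] at hj
        · rwa [hx'', Function.update_of_ne hjj] at hj
      · intro hcon
        have : j0 ∈ Finset.univ.filter fun j => x'' j := hcon (by simp [hxj0])
        simp [hx'', Function.update_self] at this
    have hx''d : (Finset.univ.filter fun j => x'' j).card < d :=
      lt_of_le_of_lt (Finset.card_le_card hx''le.1) hxd
    have hmem : facetOf f x'' ∈ Set.range F := by
      rw [hrange]; exact ⟨x'', hx''d, rfl⟩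
    obtain ⟨k', hFk'⟩ := hmem
    have hk'i : k' < i := by
      by_contra hle
      push_neg at hle
      have := hmono i k' hle
      rw [hFi, hFk', zCount_facetOf, zCount_facetOf] at this
      exact absurd this (not_le.mpr (Finset.card_lt_card hx''le))
    refine ⟨(F i).erase (j0, true), ?_, Finset.erase_subset _ _, ?_, k', hk'i, ?_⟩
    · intro v hv
      refine Finset.mem_erase.2 ⟨?_, hsFi hv⟩
      rintro rfl
      have := hsFk hv
      rw [hFk, mem_facetOf] at this
      simp [hx'j0] at this
    · rw [Finset.card_erase_of_mem, hFi, card_facetOf]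
      rw [hFi, mem_facetOf]; exact hxj0
    · intro v hv
      obtain ⟨hvne, hvFi⟩ := Finset.mem_erase.1 hv
      rw [hFi] at hvFi
      obtain ⟨j, -, rfl⟩ := Finset.mem_image.1 hvFi
      have hjj0 : j ≠ j0 := by
        rintro rfl
        exact hvne (by rw [hxj0])
      rw [hFk', mem_facetOf, hx'', Function.update_of_ne hjj0]
  constructor
  · intro i
    obtain ⟨x, -, hFi⟩ := hx i
    rw [hFi, card_facetOf]
  · intro i hi
    refine ⟨?_, key i hi⟩
    obtain ⟨t, -, ht2, ht3, hk⟩ := key i hi ∅ (Finset.empty_subset _)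
      ⟨⟨0, lt_trans hi i.isLt⟩, by simpa [Fin.lt_def] using hi, Finset.empty_subset _⟩
    exact ⟨t, ht2, ht3, hk⟩
end

section
/- Let $R = \bigoplus_{e \le 0} R_e$ be a negatively graded ring, $N$ a graded right $R$-module supported in degree $0$, and $M$ a graded left $R$-module. For an integer $n$, let $M_{\ge n} := M / \bigoplus_{e < n} M_e$. Then there is a canonical isomorphism $(N \otimes_R M)_{\ge n} \cong N \otimes_R (M_{\ge n})$ of graded abelian groups. -/
open TensorProduct

set_option synthInstance.maxHeartbeats 1000000 in
set_option maxHeartbeats 1000000 in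
/-- Lemma 2.3.4(i) of the paper: let `R` be a negatively graded ring, `N` a graded
`R`-module supported in degree `0`, and `M` a graded `R`-module.  Then there is a
canonical isomorphism `(N ⊗_R M)_{≥n} ≅ N ⊗_R (M_{≥n})` of graded abelian groups.
This is encoded as follows: the canonical map `N ⊗_R M → N ⊗_R (M_{≥n})` (induced by
the quotient map `M → M_{≥n} = M/⊕_{e<n} M_e`) is surjective, and its kernel is
exactly the span of the homogeneous tensors `a ⊗ m` of total degree `< n`, i.e. the
part of `N ⊗_R M` of degrees `< n`; hence it induces the canonical isomorphism. -/
theorem stmt_8 {R : Type*} [CommRing R] (𝒜 : ℤ → AddSubgroup R)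
    (hinternalR : DirectSum.IsInternal 𝒜)
    (hone : (1 : R) ∈ 𝒜 0)
    (hmul : ∀ {i j : ℤ} {a b : R}, a ∈ 𝒜 i → b ∈ 𝒜 j → a * b ∈ 𝒜 (i + j))
    (hneg : ∀ e : ℤ, 0 < e → 𝒜 e = ⊥)
    {N : Type*} [AddCommGroup N] [Module R N] (𝓝 : ℤ → AddSubgroup N)
    (hinternalN : DirectSum.IsInternal 𝓝)
    (hsmulN : ∀ {i j : ℤ} {a : R} {x : N}, a ∈ 𝒜 i → x ∈ 𝓝 j → a • x ∈ 𝓝 (i + j))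
    (hdeg0 : ∀ e : ℤ, e ≠ 0 → 𝓝 e = ⊥)
    {M : Type*} [AddCommGroup M] [Module R M] (𝓜 : ℤ → AddSubgroup M)
    (hinternalM : DirectSum.IsInternal 𝓜)
    (hsmulM : ∀ {i j : ℤ} {a : R} {x : M}, a ∈ 𝒜 i → x ∈ 𝓜 j → a • x ∈ 𝓜 (i + j))
    (n : ℤ) :
    Function.Surjective
      (LinearMap.lTensor N
        (Submodule.span R (⋃ e < n, ((𝓜 e : Set M))) : Submodule R M).mkQ) ∧
    LinearMap.ker
      (LinearMap.lTensor N
        (Submodule.span R (⋃ e < n, ((𝓜 e : Set M))) : Submodule R M).mkQ) =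
      Submodule.span R {x : N ⊗[R] M | ∃ (i j : ℤ) (a : N) (m : M),
        i + j < n ∧ a ∈ 𝓝 i ∧ m ∈ 𝓜 j ∧ x = a ⊗ₜ[R] m} := by

  classical
  set S : Submodule R M := Submodule.span R (⋃ e < n, ((𝓜 e : Set M))) with hS
  have hN0 : ∀ a : N, a ∈ 𝓝 0 := by
    have key : ∀ x : DirectSum ℤ (fun i => 𝓝 i),
        DirectSum.coeAddMonoidHom 𝓝 x ∈ 𝓝 0 := by
      intro x
      refine DirectSum.induction_on x ?_ ?_ ?_
      · rw [(DirectSum.coeAddMonoidHom 𝓝).map_zero]; exact zero_mem _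
      · intro i y
        rw [DirectSum.coeAddMonoidHom_of]
        by_cases hi : i = 0
        · exact hi ▸ y.2
        · have hy : (y : N) = 0 := by
            have h2 : (y : N) ∈ (⊥ : AddSubgroup N) := hdeg0 i hi ▸ y.2
            exact AddSubgroup.mem_bot.mp h2
          rw [hy]; exact zero_mem _
      · intro x y hx hy
        rw [(DirectSum.coeAddMonoidHom 𝓝).map_add]; exact add_mem hx hy
    intro a
    obtain ⟨x, hx⟩ := hinternalN.surjective a
    exact hx ▸ key x
  constructor
  · exact LinearMap.lTensor_surjective N (Submodule.mkQ_surjective S)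
  · have hexact : Function.Exact (LinearMap.lTensor N S.subtype) (LinearMap.lTensor N S.mkQ) :=
      lTensor_exact N (LinearMap.exact_subtype_mkQ S) (Submodule.mkQ_surjective S)
    rw [LinearMap.exact_iff] at hexact
    rw [hexact]
    apply le_antisymm
    · rintro x ⟨y, rfl⟩
      induction y using TensorProduct.induction_on with
      | zero => rw [map_zero]; exact zero_mem _
      | tmul a s =>
          rw [LinearMap.lTensor_tmul]
          have key : S ≤ Submodule.comap ((TensorProduct.mk R N M) a)
              (Submodule.span R {x : N ⊗[R] M | ∃ (i j : ℤ) (b : N) (m : M),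
                i + j < n ∧ b ∈ 𝓝 i ∧ m ∈ 𝓜 j ∧ x = b ⊗ₜ[R] m}) := by
            rw [hS, Submodule.span_le]
            rintro m hm
            simp only [Set.mem_iUnion] at hm
            obtain ⟨e, he, hme⟩ := hm
            apply Submodule.subset_span
            exact ⟨0, e, a, m, by simpa using he, hN0 a, hme, rfl⟩
          exact key s.2
      | add x y hx hy => rw [map_add]; exact add_mem hx hy
    · rw [Submodule.span_le]
      rintro x ⟨i, j, a, m, hij, ha, hm, rfl⟩
      by_cases hi : i = 0
      · subst hi
        have hmS : m ∈ S := by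
          rw [hS]
          exact Submodule.subset_span
            (Set.mem_iUnion.mpr ⟨j, Set.mem_iUnion.mpr ⟨by simpa using hij, hm⟩⟩)
        exact ⟨a ⊗ₜ ⟨m, hmS⟩, rfl⟩
      · have ha0 : a = 0 := by
          have h2 := ha; rw [hdeg0 i hi] at h2; simpa using h2
        rw [ha0]
        simp only [TensorProduct.zero_tmul]
        exact zero_mem _
end

section
/- Let $R = \bigoplus_{e \le 0} R_e$ be a negatively graded ring, $N$ a graded right $R$-module supported in degree $0$, and $n, i \ge 0$. If $f : M \to M'$ is a morphism of graded left $R$-modules inducing an isomorphism $M_{\ge n} \to M'_{\ge n}$ on truncations, then the induced map $\mathrm{Tor}_i^R(N, M)_{\ge n} \to \mathrm{Tor}_i^R(N, M')_{\ge n}$ of graded abelian groups is an isomorphism. -/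
open TensorProduct

/-- The degree-`e` part of `P ⊗_R M` for graded modules `P`, `M`: the additive
subgroup generated by the homogeneous tensors `p ⊗ m` of total degree `e`. -/
noncomputable def tensorDeg {R P M : Type} [CommRing R] [AddCommGroup P] [Module R P]
    [AddCommGroup M] [Module R M] (Pgr : ℤ → AddSubgroup P) (𝓜 : ℤ → AddSubgroup M)
    (e : ℤ) : AddSubgroup (P ⊗[R] M) :=
  AddSubgroup.closure {x | ∃ (a b : ℤ) (p : P) (m : M),
    a + b = e ∧ p ∈ Pgr a ∧ m ∈ 𝓜 b ∧ x = p ⊗ₜ[R] m}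

set_option maxHeartbeats 1000000
set_option synthInstance.maxHeartbeats 400000

section Aux
variable {A : Type} [AddCommGroup A]

/-- decompose an element of the closure of a union of subgroups -/
theorem aux_closure_decomp (G : ℤ → AddSubgroup A) (I : Set ℤ)
    {x : A} (hx : x ∈ AddSubgroup.closure (⋃ d ∈ I, (G d : Set A))) :
    ∃ (s : Finset ℤ) (u : ℤ → A), ↑s ⊆ I ∧ (∀ c, u c ∈ G c) ∧ (∀ c ∉ s, u c = 0) ∧
      x = ∑ c ∈ s, u c := by
  classical
  induction hx using AddSubgroup.closure_induction with
  | mem y hy =>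
    simp only [Set.mem_iUnion] at hy
    obtain ⟨d, hd, hyd⟩ := hy
    refine ⟨{d}, fun c => if c = d then y else 0, by simpa using hd, fun c => ?_,
      fun c hc => ?_, by simp⟩
    · by_cases h : c = d
      · subst h; simpa using hyd
      · simp only [if_neg h]; exact (G c).zero_mem
    · simp only [Finset.mem_singleton] at hc; simp [hc]
  | zero => exact ⟨∅, 0, by simp, fun c => (G c).zero_mem, by simp, by simp⟩
  | add y z _ _ hy hz =>
    obtain ⟨s₁, u₁, hs₁, hu₁, h0₁, hsum₁⟩ := hy
    obtain ⟨s₂, u₂, hs₂, hu₂, h0₂, hsum₂⟩ := hz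
    refine ⟨s₁ ∪ s₂, u₁ + u₂, ?_, fun c => add_mem (hu₁ c) (hu₂ c),
      fun c hc => ?_, ?_⟩
    · intro c hc
      rcases Finset.mem_union.1 (by exact_mod_cast hc) with h | h
      exacts [hs₁ h, hs₂ h]
    · simp only [Finset.mem_union, not_or] at hc
      simp [h0₁ _ hc.1, h0₂ _ hc.2]
    · have e1 : ∑ c ∈ s₁ ∪ s₂, u₁ c = ∑ c ∈ s₁, u₁ c :=
        (Finset.sum_subset Finset.subset_union_left (fun c _ hc => h0₁ c hc)).symm
      have e2 : ∑ c ∈ s₁ ∪ s₂, u₂ c = ∑ c ∈ s₂, u₂ c :=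
        (Finset.sum_subset Finset.subset_union_right (fun c _ hc => h0₂ c hc)).symm
      simp only [Pi.add_apply, Finset.sum_add_distrib, e1, e2, hsum₁, hsum₂]
  | neg y _ hy =>
    obtain ⟨s, u, hs, hu, h0, hsum⟩ := hy
    exact ⟨s, -u, hs, fun c => neg_mem (hu c), fun c hc => by simp [h0 c hc],
      by simp [hsum]⟩

/-- uniqueness: sum of homogeneous pieces is zero implies each is zero -/
theorem aux_internal_sum_zero {G : ℤ → AddSubgroup A} (hint : DirectSum.IsInternal G)
    (s : Finset ℤ) (u : ℤ → A) (hu : ∀ c, u c ∈ G c) (hsum : ∑ c ∈ s, u c = 0) :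
    ∀ c ∈ s, u c = 0 := by
  classical
  set y : DirectSum ℤ (fun c => G c) :=
    ∑ c ∈ s, DirectSum.of (fun c => G c) c ⟨u c, hu c⟩ with hy
  have hy0 : y = 0 := by
    apply hint.injective
    rw [map_zero, hy, map_sum]
    simpa only [DirectSum.coeAddMonoidHom_of] using hsum
  intro c₀ hc₀
  have h1 : (y c₀ : A) = 0 := by rw [hy0]; simp
  rw [hy, DFinsupp.finset_sum_apply] at h1
  have h2 : ((∑ c ∈ s.attach, (DirectSum.of (fun c => (G c)) c.1 ⟨u c.1, hu c.1⟩) c₀ : G c₀) : A)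
      = 0 := by
    rw [← h1, ← Finset.sum_attach s (fun c => (DirectSum.of (fun c => (G c)) c ⟨u c, hu c⟩) c₀)]
  rw [AddSubmonoidClass.coe_finset_sum] at h2
  have h3 : ∀ c ∈ s.attach,
      ((DirectSum.of (fun c => (G c)) c.1 ⟨u c.1, hu c.1⟩ c₀ : G c₀) : A)
        = if c.1 = c₀ then u c.1 else 0 := by
    intro c _
    rw [DirectSum.coe_of_apply]
    split <;> simp
  rw [Finset.sum_congr rfl h3, Finset.sum_attach s (fun c => if c = c₀ then u c else 0),
    Finset.sum_ite_eq' s c₀ u] at h2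
  rwa [if_pos hc₀] at h2

end Aux

section Aux2
variable {A : Type} [AddCommGroup A]

theorem aux_internal_homog {G : ℤ → AddSubgroup A} (hint : DirectSum.IsInternal G)
    {a : ℤ} {x : A} (hx : x ∈ G a) (s : Finset ℤ) (u : ℤ → A) (hu : ∀ c, u c ∈ G c)
    (hu0 : ∀ c ∉ s, u c = 0) (hsum : ∑ c ∈ s, u c = x) :
    u a = x ∧ ∀ c, c ≠ a → u c = 0 := by
  classical
  set u' : ℤ → A := fun c => if c = a then u a - x else u c with hu'def
  have hu' : ∀ c, u' c ∈ G c := by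
    intro c
    by_cases h : c = a
    · rw [hu'def]; simp only [if_pos h, h]; exact sub_mem (hu a) hx
    · simpa [hu'def, h] using hu c
  have hsum' : ∑ c ∈ insert a s, u' c = 0 := by
    have h1 : ∀ c ∈ insert a s, u' c = u c - (if c = a then x else 0) := by
      intro c _
      by_cases h : c = a <;> simp [hu'def, h]
    have h2 : ∑ c ∈ insert a s, u c = ∑ c ∈ s, u c :=
      (Finset.sum_subset (Finset.subset_insert a s) (fun c _ hc => hu0 c hc)).symm
    rw [Finset.sum_congr rfl h1, Finset.sum_sub_distrib,
      Finset.sum_ite_eq' (insert a s) a (fun _ => x), if_pos (Finset.mem_insert_self a s),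
      h2, hsum, sub_self]
  have hz := aux_internal_sum_zero hint (insert a s) u' hu' hsum'
  constructor
  · have := hz a (Finset.mem_insert_self a s)
    simpa [hu'def, sub_eq_zero] using this
  · intro c hc
    by_cases h : c ∈ s
    · have := hz c (Finset.mem_insert_of_mem h)
      simpa [hu'def, hc] using this
    · exact hu0 c h

theorem aux_internal_decomp {G : ℤ → AddSubgroup A} (hint : DirectSum.IsInternal G) (x : A) :
    ∃ (s : Finset ℤ) (u : ℤ → A), (∀ c, u c ∈ G c) ∧ (∀ c ∉ s, u c = 0) ∧
      x = ∑ c ∈ s, u c := by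
  classical
  obtain ⟨y, hy⟩ := hint.surjective x
  refine ⟨y.support, fun c => (y c : A), fun c => (y c).2, fun c hc => ?_, ?_⟩
  · show ((y c : A)) = 0
    rw [DFinsupp.notMem_support_iff.1 hc, ZeroMemClass.coe_zero]
  · rw [← hy, DirectSum.coeAddMonoidHom_eq_dfinsuppSum, DFinsupp.sum]

theorem aux_internal_proj {G : ℤ → AddSubgroup A} (hint : DirectSum.IsInternal G) :
    ∃ pr : ℤ → A →+ A, (∀ b x, pr b x ∈ G b) ∧ (∀ b x, x ∈ G b → pr b x = x) ∧
      (∀ b c x, x ∈ G c → b ≠ c → pr b x = 0) := by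
  classical
  set E : (DirectSum ℤ fun c => G c) ≃+ A :=
    AddEquiv.ofBijective (DirectSum.coeAddMonoidHom G) hint with hE
  have hEapp : ∀ z, E z = DirectSum.coeAddMonoidHom G z := fun z => rfl
  refine ⟨fun b => AddMonoidHom.mk' (fun x => ((E.symm x) b : A)) ?_, ?_, ?_, ?_⟩
  · intro x y
    show ((E.symm (x + y)) b : A) = ((E.symm x) b : A) + ((E.symm y) b : A)
    rw [map_add, DirectSum.add_apply, AddSubgroup.coe_add]
  · intro b x
    exact ((E.symm x) b).2
  · intro b x hx
    have hs : E.symm x = DirectSum.of (fun c => G c) b ⟨x, hx⟩ := by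
      apply E.injective
      rw [AddEquiv.apply_symm_apply, hEapp, DirectSum.coeAddMonoidHom_of]
    show ((E.symm x) b : A) = x
    rw [hs, DirectSum.of_eq_same]
  · intro b c x hx hbc
    have hs : E.symm x = DirectSum.of (fun d => G d) c ⟨x, hx⟩ := by
      apply E.injective
      rw [AddEquiv.apply_symm_apply, hEapp, DirectSum.coeAddMonoidHom_of]
    show ((E.symm x) b : A) = 0
    rw [hs, DirectSum.of_eq_of_ne _ _ _ hbc, ZeroMemClass.coe_zero]

end Aux2

section Aux3

variable {R P : Type} [CommRing R] [AddCommGroup P] [Module R P]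

/-- coordinates of homogeneous elements w.r.t. a homogeneous basis are homogeneous -/
theorem aux_repr_homog (𝒜 : ℤ → AddSubgroup R) (hR : DirectSum.IsInternal 𝒜)
    (Pgr : ℤ → AddSubgroup P) (hP : DirectSum.IsInternal Pgr)
    (hsmulP : ∀ {i j : ℤ} {r : R} {x : P}, r ∈ 𝒜 i → x ∈ Pgr j → r • x ∈ Pgr (i + j))
    {ι : Type} (b : Module.Basis ι R P) (deg : ι → ℤ) (hb : ∀ k, b k ∈ Pgr (deg k))
    {a : ℤ} {p : P} (hp : p ∈ Pgr a) (k : ι) : b.repr p k ∈ 𝒜 (a - deg k) := by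
  classical
  by_cases hk : k ∈ (b.repr p).support
  case neg =>
    rw [Finsupp.notMem_support_iff.1 hk]
    exact (𝒜 (a - deg k)).zero_mem
  set S := (b.repr p).support with hS
  choose sv v hv hv0 hvsum using fun k' => aux_internal_decomp hR (b.repr p k')
  set u : ℤ → P := fun dgr => ∑ k' ∈ S, (v k' (dgr - deg k')) • b k' with hu
  have humem : ∀ dgr, u dgr ∈ Pgr dgr := by
    intro dgr
    refine AddSubgroup.sum_mem _ (fun k' _ => ?_)
    have := hsmulP (hv k' (dgr - deg k')) (hb k')
    rwa [sub_add_cancel] at this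
  set D : Finset ℤ := S.biUnion (fun k' => (sv k').image (· + deg k')) with hD
  have hu0 : ∀ dgr ∉ D, u dgr = 0 := by
    intro dgr hdgr
    rw [hu]
    apply Finset.sum_eq_zero
    intro k' hk'
    have : v k' (dgr - deg k') = 0 := by
      apply hv0
      intro hmem
      exact hdgr (Finset.mem_biUnion.2 ⟨k', hk', Finset.mem_image.2 ⟨_, hmem, by ring⟩⟩)
    rw [this, zero_smul]
  have hDsum : ∑ dgr ∈ D, u dgr = p := by
    rw [hu, Finset.sum_comm]
    have hinner : ∀ k' ∈ S, ∑ dgr ∈ D, v k' (dgr - deg k') • b k' = (b.repr p k') • b k' := by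
      intro k' hk'
      rw [← Finset.sum_smul]
      congr 1
      have himg : ∑ dgr ∈ D, v k' (dgr - deg k') = ∑ c ∈ D.image (· - deg k'), v k' c := by
        rw [Finset.sum_image (fun x _ y _ h => by omega)]
      rw [himg]
      have hsub : sv k' ⊆ D.image (· - deg k') := by
        intro c hc
        refine Finset.mem_image.2 ⟨c + deg k', ?_, by ring⟩
        exact Finset.mem_biUnion.2 ⟨k', hk', Finset.mem_image.2 ⟨c, hc, rfl⟩⟩
      rw [← Finset.sum_subset hsub (fun c _ hc => hv0 k' c hc), ← hvsum k']
    rw [Finset.sum_congr rfl hinner]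
    conv_rhs => rw [← b.linearCombination_repr p]
    rw [Finsupp.linearCombination_apply, Finsupp.sum]
  obtain ⟨hua, -⟩ := aux_internal_homog hP hp D u humem hu0 hDsum
  have hrepr : b.repr p k = v k (a - deg k) := by
    conv_lhs => rw [← hua, hu]
    rw [map_sum, Finsupp.finset_sum_apply]
    have : ∀ k' ∈ S, (b.repr ((v k' (a - deg k')) • b k')) k
        = if k' = k then v k' (a - deg k') else 0 := by
      intro k' _
      rw [map_smul, Finsupp.smul_apply, b.repr_self, Finsupp.single_apply]
      by_cases h : k' = k <;> simp [h]
    rw [Finset.sum_congr rfl this, Finset.sum_ite_eq' S k (fun k' => v k' (a - deg k')),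
      if_pos hk]
  rw [hrepr]
  exact hv k (a - deg k)

/-- a free graded module on generators of degree `≤ 0` vanishes in positive degrees -/
theorem aux_pos_bot (𝒜 : ℤ → AddSubgroup R) (hR : DirectSum.IsInternal 𝒜)
    (hneg : ∀ e : ℤ, 0 < e → 𝒜 e = ⊥)
    (Pgr : ℤ → AddSubgroup P) (hP : DirectSum.IsInternal Pgr)
    (hsmulP : ∀ {i j : ℤ} {r : R} {x : P}, r ∈ 𝒜 i → x ∈ Pgr j → r • x ∈ Pgr (i + j))
    {ι : Type} (b : Module.Basis ι R P) (deg : ι → ℤ) (hb : ∀ k, b k ∈ Pgr (deg k))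
    (hdeg : ∀ k, deg k ≤ 0)
    {a : ℤ} (ha : 0 < a) {p : P} (hp : p ∈ Pgr a) : p = 0 := by
  have hzero : ∀ k, b.repr p k = 0 := by
    intro k
    have := aux_repr_homog 𝒜 hR Pgr hP hsmulP b deg hb hp k
    rw [hneg (a - deg k) (by have := hdeg k; omega)] at this
    simpa using this
  have : b.repr p = 0 := Finsupp.ext hzero
  simpa using congrArg b.repr.symm this

end Aux3

section Aux4

variable {R P M : Type} [CommRing R] [AddCommGroup P] [Module R P]
  [AddCommGroup M] [Module R M]

theorem aux_tensor_coords
    (𝒜 : ℤ → AddSubgroup R) (hR : DirectSum.IsInternal 𝒜)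
    (Pgr : ℤ → AddSubgroup P) (hP : DirectSum.IsInternal Pgr)
    (hsmulP : ∀ {i j : ℤ} {r : R} {x : P}, r ∈ 𝒜 i → x ∈ Pgr j → r • x ∈ Pgr (i + j))
    {ι : Type} (b : Module.Basis ι R P) (deg : ι → ℤ) (hb : ∀ k, b k ∈ Pgr (deg k))
    (𝓜 : ℤ → AddSubgroup M)
    (hsmulM : ∀ {i j : ℤ} {r : R} {x : M}, r ∈ 𝒜 i → x ∈ 𝓜 j → r • x ∈ 𝓜 (i + j)) :
    ∃ coords : ι → (P ⊗[R] M) →ₗ[R] M,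
      (∀ (p : P) (m : M) (k : ι), coords k (p ⊗ₜ[R] m) = b.repr p k • m) ∧
      (∀ x, (∀ k, coords k x = 0) → x = 0) ∧
      (∀ (e : ℤ) (x : P ⊗[R] M), x ∈ tensorDeg Pgr 𝓜 e → ∀ k, coords k x ∈ 𝓜 (e - deg k)) := by
  classical
  set φ : (P ⊗[R] M) ≃ₗ[R] (ι →₀ M) :=
    (TensorProduct.congr b.repr (LinearEquiv.refl R M)).trans
      (TensorProduct.finsuppScalarLeft R M ι) with hφ
  have hφtmul : ∀ (p : P) (m : M) (k : ι), φ (p ⊗ₜ[R] m) k = b.repr p k • m := by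
    intro p m k
    rw [hφ]
    simp [TensorProduct.finsuppScalarLeft_apply_tmul_apply]
  refine ⟨fun k => (Finsupp.lapply k) ∘ₗ (φ : (P ⊗[R] M) →ₗ[R] (ι →₀ M)), ?_, ?_, ?_⟩
  · intro p m k
    simpa using hφtmul p m k
  · intro x hx
    have : φ x = 0 := Finsupp.ext (fun k => by simpa using hx k)
    simpa using congrArg φ.symm this
  · intro e x hx k
    induction hx using AddSubgroup.closure_induction with
    | mem y hy =>
      obtain ⟨a, bd, p, m, habe, hpa, hmb, rfl⟩ := hy
      have h1 : φ (p ⊗ₜ[R] m) k = b.repr p k • m := hφtmul p m k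
      simp only [LinearMap.coe_comp, Function.comp_apply, LinearEquiv.coe_coe,
        Finsupp.lapply_apply, h1]
      have h2 := hsmulM (aux_repr_homog 𝒜 hR Pgr hP hsmulP b deg hb hpa k) hmb
      have h3 : a - deg k + bd = e - deg k := by omega
      rwa [h3] at h2
    | zero => simpa using (𝓜 (e - deg k)).zero_mem
    | add y z _ _ hy hz => simpa using add_mem hy hz
    | neg y _ hy => simpa using neg_mem hy

theorem aux_tensor_span
    (Pgr : ℤ → AddSubgroup P) (hP : DirectSum.IsInternal Pgr)
    (𝓜 : ℤ → AddSubgroup M) (hM : DirectSum.IsInternal 𝓜) (z : P ⊗[R] M) :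
    z ∈ AddSubgroup.closure
      (⋃ c ∈ (Set.univ : Set ℤ), ((tensorDeg Pgr 𝓜 c : AddSubgroup (P ⊗[R] M)) :
        Set (P ⊗[R] M))) := by
  classical
  induction z with
  | zero => exact AddSubgroup.zero_mem _
  | tmul p m =>
    obtain ⟨s, u, hu, hu0, hsump⟩ := aux_internal_decomp hP p
    obtain ⟨t, v, hv, hv0, hsumm⟩ := aux_internal_decomp hM m
    rw [hsump, hsumm, TensorProduct.sum_tmul]
    refine AddSubgroup.sum_mem _ (fun a _ => ?_)
    rw [TensorProduct.tmul_sum]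
    refine AddSubgroup.sum_mem _ (fun bd _ => ?_)
    apply AddSubgroup.subset_closure
    refine Set.mem_iUnion₂.2 ⟨a + bd, Set.mem_univ _, ?_⟩
    exact AddSubgroup.subset_closure ⟨a, bd, u a, v bd, rfl, hu a, hv bd, rfl⟩
  | add x y hx hy => exact AddSubgroup.add_mem _ hx hy

end Aux4

section Aux5

variable {R P M : Type} [CommRing R] [AddCommGroup P] [Module R P]
  [AddCommGroup M] [Module R M]

theorem aux_tensor_proj
    (𝒜 : ℤ → AddSubgroup R) (hR : DirectSum.IsInternal 𝒜)
    (Pgr : ℤ → AddSubgroup P) (hP : DirectSum.IsInternal Pgr)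
    (hsmulP : ∀ {i j : ℤ} {r : R} {x : P}, r ∈ 𝒜 i → x ∈ Pgr j → r • x ∈ Pgr (i + j))
    {ι : Type} (b : Module.Basis ι R P) (deg : ι → ℤ) (hb : ∀ k, b k ∈ Pgr (deg k))
    (𝓜 : ℤ → AddSubgroup M) (hM : DirectSum.IsInternal 𝓜)
    (hsmulM : ∀ {i j : ℤ} {r : R} {x : M}, r ∈ 𝒜 i → x ∈ 𝓜 j → r • x ∈ 𝓜 (i + j))
    (e : ℤ) :
    ∃ π : (P ⊗[R] M) →+ (P ⊗[R] M),
      (∀ z, π z ∈ tensorDeg Pgr 𝓜 e) ∧ (∀ x ∈ tensorDeg Pgr 𝓜 e, π x = x) ∧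
      (∀ c, c ≠ e → ∀ x ∈ tensorDeg Pgr 𝓜 c, π x = 0) := by
  classical
  obtain ⟨pr, hprmem, hprfix, hprkill⟩ := aux_internal_proj hM
  set φ : (P ⊗[R] M) ≃ₗ[R] (ι →₀ M) :=
    (TensorProduct.congr b.repr (LinearEquiv.refl R M)).trans
      (TensorProduct.finsuppScalarLeft R M ι) with hφ
  have hφtmul : ∀ (p : P) (m : M) (k : ι), φ (p ⊗ₜ[R] m) k = b.repr p k • m := by
    intro p m k
    rw [hφ]
    simp [TensorProduct.finsuppScalarLeft_apply_tmul_apply]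
  set F : (P ⊗[R] M) → (P ⊗[R] M) :=
    fun z => ∑ k ∈ (φ z).support, (b k) ⊗ₜ[R] (pr (e - deg k) (φ z k)) with hF
  have hFsub : ∀ (z : P ⊗[R] M) (T : Finset ι), (φ z).support ⊆ T →
      F z = ∑ k ∈ T, (b k) ⊗ₜ[R] (pr (e - deg k) (φ z k)) := by
    intro z T hT
    refine Finset.sum_subset hT (fun k _ hk => ?_)
    rw [Finsupp.notMem_support_iff.1 hk, map_zero, TensorProduct.tmul_zero]
  have hadd : ∀ x y, F (x + y) = F x + F y := by
    intro x y
    have hsub : (φ (x + y)).support ⊆ (φ x).support ∪ (φ y).support := by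
      rw [map_add]; exact Finsupp.support_add
    rw [hFsub _ _ hsub,
      hFsub x ((φ x).support ∪ (φ y).support) Finset.subset_union_left,
      hFsub y ((φ x).support ∪ (φ y).support) Finset.subset_union_right,
      ← Finset.sum_add_distrib]
    refine Finset.sum_congr rfl (fun k _ => ?_)
    rw [map_add, Finsupp.add_apply, map_add, TensorProduct.tmul_add]
  refine ⟨AddMonoidHom.mk' F hadd, ?_, ?_, ?_⟩
  · intro z
    refine AddSubgroup.sum_mem _ (fun k _ => ?_)
    exact AddSubgroup.subset_closure
      ⟨deg k, e - deg k, b k, pr (e - deg k) (φ z k), by ring, hb k, hprmem _ _, rfl⟩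
  · intro x hx
    show F x = x
    induction hx using AddSubgroup.closure_induction with
    | mem y hy =>
      obtain ⟨a, bd, p, m, habe, hpa, hmb, rfl⟩ := hy
      have hsub : (φ (p ⊗ₜ[R] m)).support ⊆ (b.repr p).support := by
        intro k hk
        by_contra h
        rw [Finsupp.mem_support_iff, hφtmul, Finsupp.notMem_support_iff.1 h, zero_smul] at hk
        exact hk rfl
      rw [hFsub _ _ hsub]
      have hterm : ∀ k ∈ (b.repr p).support,
          (b k) ⊗ₜ[R] (pr (e - deg k) (φ (p ⊗ₜ[R] m) k)) = (b.repr p k • b k) ⊗ₜ[R] m := by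
        intro k _
        rw [hφtmul]
        have hmem : b.repr p k • m ∈ 𝓜 (e - deg k) := by
          have h2 := hsmulM (aux_repr_homog 𝒜 hR Pgr hP hsmulP b deg hb hpa k) hmb
          have h3 : a - deg k + bd = e - deg k := by omega
          rwa [h3] at h2
        rw [hprfix _ _ hmem, TensorProduct.tmul_smul, TensorProduct.smul_tmul']
      rw [Finset.sum_congr rfl hterm, ← TensorProduct.sum_tmul]
      congr 1
      conv_rhs => rw [← b.linearCombination_repr p]
      rw [Finsupp.linearCombination_apply, Finsupp.sum]
    | zero => show F 0 = 0; rw [hF]; simp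
    | add x y _ _ hx hy => rw [hadd, hx, hy]
    | neg x _ hx =>
      have : F (-x) + F x = 0 := by rw [← hadd, neg_add_cancel, hF]; simp
      rw [eq_neg_of_add_eq_zero_left this, hx]
  · intro c hc x hx
    show F x = 0
    induction hx using AddSubgroup.closure_induction with
    | mem y hy =>
      obtain ⟨a, bd, p, m, habe, hpa, hmb, rfl⟩ := hy
      have hsub : (φ (p ⊗ₜ[R] m)).support ⊆ (b.repr p).support := by
        intro k hk
        by_contra h
        rw [Finsupp.mem_support_iff, hφtmul, Finsupp.notMem_support_iff.1 h, zero_smul] at hk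
        exact hk rfl
      rw [hFsub _ _ hsub]
      refine Finset.sum_eq_zero (fun k _ => ?_)
      rw [hφtmul]
      have hmem : b.repr p k • m ∈ 𝓜 (c - deg k) := by
        have h2 := hsmulM (aux_repr_homog 𝒜 hR Pgr hP hsmulP b deg hb hpa k) hmb
        have h3 : a - deg k + bd = c - deg k := by omega
        rwa [h3] at h2
      rw [hprkill _ _ _ hmem (by omega), TensorProduct.tmul_zero]
    | zero => show F 0 = 0; rw [hF]; simp
    | add x y _ _ hx hy => rw [hadd, hx, hy, add_zero]
    | neg x _ hx =>
      have : F (-x) + F x = 0 := by rw [← hadd, neg_add_cancel, hF]; simp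
      rw [hx, add_zero] at this
      exact this

end Aux5

section Aux6
variable {R M : Type} [CommRing R] [AddCommGroup M] [Module R M]

theorem aux_span_decomp
    (𝒜 : ℤ → AddSubgroup R) (hR : DirectSum.IsInternal 𝒜)
    (hneg : ∀ e : ℤ, 0 < e → 𝒜 e = ⊥)
    (𝓜 : ℤ → AddSubgroup M)
    (hsmulM : ∀ {i j : ℤ} {r : R} {x : M}, r ∈ 𝒜 i → x ∈ 𝓜 j → r • x ∈ 𝓜 (i + j))
    (n : ℤ) {x : M} (hx : x ∈ (Submodule.span R (⋃ e < n, ((𝓜 e : Set M))))) :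
    ∃ (s : Finset ℤ) (u : ℤ → M), ↑s ⊆ Set.Iio n ∧ (∀ c, u c ∈ 𝓜 c) ∧
      (∀ c ∉ s, u c = 0) ∧ x = ∑ c ∈ s, u c := by
  classical
  have hsmulT : ∀ (r : R) (y : M), y ∈ AddSubgroup.closure (⋃ d ∈ Set.Iio n, ((𝓜 d : Set M))) →
      r • y ∈ AddSubgroup.closure (⋃ d ∈ Set.Iio n, ((𝓜 d : Set M))) := by
    intro r y hy
    induction hy using AddSubgroup.closure_induction with
    | mem m hm =>
      simp only [Set.mem_iUnion, Set.mem_Iio] at hm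
      obtain ⟨dd, hdd, hmd⟩ := hm
      obtain ⟨s, v, hv, hv0, hrsum⟩ := aux_internal_decomp hR r
      rw [hrsum, Finset.sum_smul]
      refine AddSubgroup.sum_mem _ (fun c _ => ?_)
      by_cases hc : 0 < c
      · have : v c = 0 := by have := hv c; rw [hneg c hc] at this; simpa using this
        rw [this, zero_smul]
        exact AddSubgroup.zero_mem _
      · apply AddSubgroup.subset_closure
        refine Set.mem_iUnion₂.2 ⟨c + dd, ?_, hsmulM (hv c) hmd⟩
        simp only [Set.mem_Iio]; omega
    | zero => rw [smul_zero]; exact AddSubgroup.zero_mem _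
    | add a b _ _ ha hb => rw [smul_add]; exact AddSubgroup.add_mem _ ha hb
    | neg a _ ha => rw [smul_neg]; exact AddSubgroup.neg_mem _ ha
  have hT : x ∈ AddSubgroup.closure (⋃ d ∈ Set.Iio n, ((𝓜 d : Set M))) := by
    induction hx using Submodule.span_induction with
    | mem y hy =>
      apply AddSubgroup.subset_closure
      simp only [Set.mem_iUnion] at hy ⊢
      obtain ⟨dd, hdd, hyd⟩ := hy
      exact ⟨dd, by simpa [Set.mem_Iio] using hdd, hyd⟩
    | zero => exact AddSubgroup.zero_mem _
    | add a b _ _ ha hb => exact AddSubgroup.add_mem _ ha hb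
    | smul r y _ hy => exact hsmulT r y hy
  exact aux_closure_decomp 𝓜 (Set.Iio n) hT

theorem aux_homog_zero
    (𝒜 : ℤ → AddSubgroup R) (hR : DirectSum.IsInternal 𝒜)
    (hneg : ∀ e : ℤ, 0 < e → 𝒜 e = ⊥)
    (𝓜 : ℤ → AddSubgroup M) (hM : DirectSum.IsInternal 𝓜)
    (hsmulM : ∀ {i j : ℤ} {r : R} {x : M}, r ∈ 𝒜 i → x ∈ 𝓜 j → r • x ∈ 𝓜 (i + j))
    (n b : ℤ) (hbn : n ≤ b) {x : M} (hxb : x ∈ 𝓜 b)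
    (hxs : x ∈ (Submodule.span R (⋃ e < n, ((𝓜 e : Set M))))) : x = 0 := by
  obtain ⟨s, u, hs, hu, hu0, hxsum⟩ := aux_span_decomp 𝒜 hR hneg 𝓜 hsmulM n hxs
  obtain ⟨hub, -⟩ := aux_internal_homog hM hxb s u hu hu0 hxsum.symm
  have hbs : b ∉ s := fun h => by have := hs h; simp only [Set.mem_Iio] at this; omega
  rw [← hub, hu0 b hbs]

end Aux6

/-- Lemma 2.3.4(ii) of the paper: let `R` be a negatively graded ring, `N` a graded
`R`-module supported in degree `0`, and `f : M → M'` a morphism of graded `R`-modules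
inducing an isomorphism `M_{≥n} ≅ M'_{≥n}`.  Then the induced map
`Tor_i^R(N, M)_{≥n} → Tor_i^R(N, M')_{≥n}` is an isomorphism of graded abelian groups
for every `i ≥ 0`.  Here `Tor_i^R(N, -)` is computed, with its grading, from any
graded free resolution `⋯ → P_1 → P_0 → N → 0` of `N` supported in degrees `≤ 0`,
and the conclusion is stated degreewise (for every degree `e ≥ n`) as bijectivity of
the induced maps on the degree-`e` homology of `P_• ⊗_R M → P_• ⊗_R M'`. -/
theorem stmt_9 {R : Type} [CommRing R] (𝒜 : ℤ → AddSubgroup R)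
    (hinternalR : DirectSum.IsInternal 𝒜) (hone : (1 : R) ∈ 𝒜 0)
    (hmul : ∀ {i j : ℤ} {a b : R}, a ∈ 𝒜 i → b ∈ 𝒜 j → a * b ∈ 𝒜 (i + j))
    (hneg : ∀ e : ℤ, 0 < e → 𝒜 e = ⊥)
    -- the graded module `N`, supported in degree 0
    {N : Type} [AddCommGroup N] [Module R N] (𝓝 : ℤ → AddSubgroup N)
    (hinternalN : DirectSum.IsInternal 𝓝)
    (hsmulN : ∀ {i j : ℤ} {a : R} {x : N}, a ∈ 𝒜 i → x ∈ 𝓝 j → a • x ∈ 𝓝 (i + j))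
    (hdeg0 : ∀ e : ℤ, e ≠ 0 → 𝓝 e = ⊥)
    -- the graded modules `M`, `M'`
    {M M' : Type} [AddCommGroup M] [Module R M] [AddCommGroup M'] [Module R M']
    (𝓜 : ℤ → AddSubgroup M) (𝓜' : ℤ → AddSubgroup M')
    (hinternalM : DirectSum.IsInternal 𝓜) (hinternalM' : DirectSum.IsInternal 𝓜')
    (hsmulM : ∀ {i j : ℤ} {a : R} {x : M}, a ∈ 𝒜 i → x ∈ 𝓜 j → a • x ∈ 𝓜 (i + j))
    (hsmulM' : ∀ {i j : ℤ} {a : R} {x : M'}, a ∈ 𝒜 i → x ∈ 𝓜' j → a • x ∈ 𝓜' (i + j))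
    -- the morphism `f : M → M'`, graded, inducing an isomorphism on truncations `(·)_{≥ n}`
    (n : ℤ) (f : M →ₗ[R] M')
    (hfgr : ∀ (e : ℤ) (x : M), x ∈ 𝓜 e → f x ∈ 𝓜' e)
    (hfsurj : ∀ y : M', ∃ x : M,
      f x - y ∈ (Submodule.span R (⋃ e < n, ((𝓜' e : Set M'))) : Submodule R M'))
    (hfinj : ∀ x : M,
      f x ∈ (Submodule.span R (⋃ e < n, ((𝓜' e : Set M'))) : Submodule R M') →
      x ∈ (Submodule.span R (⋃ e < n, ((𝓜 e : Set M))) : Submodule R M))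
    -- a graded free resolution `P_•` of `N` supported in degrees `≤ 0`
    (P : ℕ → Type) [∀ i, AddCommGroup (P i)] [∀ i, Module R (P i)]
    (Pgr : ∀ i, ℤ → AddSubgroup (P i))
    (hinternalP : ∀ i, DirectSum.IsInternal (Pgr i))
    (hsmulP : ∀ (i : ℕ) {a j : ℤ} {r : R} {x : P i}, r ∈ 𝒜 a → x ∈ Pgr i j →
      r • x ∈ Pgr i (a + j))
    (hfree : ∀ i, ∃ (ι : Type) (b : Module.Basis ι R (P i)), ∀ k : ι, ∃ e ≤ 0, b k ∈ Pgr i e)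
    (d : ∀ i : ℕ, P (i + 1) →ₗ[R] P i) (ε : P 0 →ₗ[R] N)
    (hdgr : ∀ (i : ℕ) (e : ℤ) (x : P (i + 1)), x ∈ Pgr (i + 1) e → d i x ∈ Pgr i e)
    (hεgr : ∀ (e : ℤ) (x : P 0), x ∈ Pgr 0 e → ε x ∈ 𝓝 e)
    (hεsurj : Function.Surjective ε)
    (hexact0 : LinearMap.ker ε = LinearMap.range (d 0))
    (hexact : ∀ i : ℕ, LinearMap.ker (d i) = LinearMap.range (d (i + 1))) :
    ∀ e : ℤ, n ≤ e →
      -- degree-`e` part of the map `Tor_0(N, M) → Tor_0(N, M')` is bijective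
      ((∀ y ∈ tensorDeg (Pgr 0) 𝓜' e, ∃ x ∈ tensorDeg (Pgr 0) 𝓜 e,
          LinearMap.lTensor (P 0) f x - y ∈ LinearMap.range (LinearMap.rTensor M' (d 0))) ∧
        (∀ x ∈ tensorDeg (Pgr 0) 𝓜 e,
          LinearMap.lTensor (P 0) f x ∈ LinearMap.range (LinearMap.rTensor M' (d 0)) →
          x ∈ LinearMap.range (LinearMap.rTensor M (d 0)))) ∧
      -- degree-`e` part of the map `Tor_{i+1}(N, M) → Tor_{i+1}(N, M')` is bijective
      (∀ i : ℕ,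
        (∀ y ∈ tensorDeg (Pgr (i + 1)) 𝓜' e, y ∈ LinearMap.ker (LinearMap.rTensor M' (d i)) →
          ∃ x ∈ tensorDeg (Pgr (i + 1)) 𝓜 e, x ∈ LinearMap.ker (LinearMap.rTensor M (d i)) ∧
            LinearMap.lTensor (P (i + 1)) f x - y ∈
              LinearMap.range (LinearMap.rTensor M' (d (i + 1)))) ∧
        (∀ x ∈ tensorDeg (Pgr (i + 1)) 𝓜 e, x ∈ LinearMap.ker (LinearMap.rTensor M (d i)) →
          LinearMap.lTensor (P (i + 1)) f x ∈
            LinearMap.range (LinearMap.rTensor M' (d (i + 1))) →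
          x ∈ LinearMap.range (LinearMap.rTensor M (d (i + 1))))) := by
  classical
  -- choose homogeneous bases
  have hdata : ∀ j : ℕ, Nonempty (Σ' (ι : Type) (b : Module.Basis ι R (P j)),
      ∀ k : ι, ∃ e ≤ 0, b k ∈ Pgr j e) := by
    intro j
    obtain ⟨ι, b, hbk⟩ := hfree j
    exact ⟨⟨ι, b, hbk⟩⟩
  set data := fun j => Classical.choice (hdata j) with hdatadef
  set degf : ∀ j, (data j).1 → ℤ := fun j k => ((data j).2.2 k).choose with hdegf
  have hdegle : ∀ j k, degf j k ≤ 0 := fun j k => ((data j).2.2 k).choose_spec.1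
  have hbmem : ∀ j k, (data j).2.1 k ∈ Pgr j (degf j k) :=
    fun j k => ((data j).2.2 k).choose_spec.2
  -- degreewise injectivity and surjectivity of f
  have hfdeginj : ∀ (bd : ℤ), n ≤ bd → ∀ x ∈ 𝓜 bd,
      f x ∈ (Submodule.span R (⋃ e < n, ((𝓜' e : Set M'))) : Submodule R M') → x = 0 := by
    intro bd hbd x hx hfx
    exact aux_homog_zero 𝒜 hinternalR hneg 𝓜 hinternalM hsmulM n bd hbd hx (hfinj x hfx)
  have hfdegsurj : ∀ (bd : ℤ), n ≤ bd → ∀ y ∈ 𝓜' bd, ∃ x ∈ 𝓜 bd, f x = y := by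
    intro bd hbd y hy
    obtain ⟨x, hx⟩ := hfsurj y
    obtain ⟨s, u, hu, hu0, hxsum⟩ := aux_internal_decomp hinternalM x
    obtain ⟨s', v, hs', hv, hv0, hvsum⟩ :=
      aux_span_decomp 𝒜 hinternalR hneg 𝓜' hsmulM' n hx
    set S : Finset ℤ := insert bd (s ∪ s') with hS
    set w : ℤ → M' := fun c => f (u c) - (if c = bd then y else 0) - v c with hw
    have hwmem : ∀ c, w c ∈ 𝓜' c := by
      intro c
      refine sub_mem (sub_mem (hfgr c (u c) (hu c)) ?_) (hv c)
      by_cases h : c = bd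
      · rw [if_pos h, h]; exact hy
      · rw [if_neg h]; exact zero_mem _
    have h1 : ∑ c ∈ S, f (u c) = f x := by
      rw [← map_sum]
      congr 1
      rw [hxsum]
      exact (Finset.sum_subset (hS ▸ (Finset.subset_union_left.trans
        (Finset.subset_insert bd (s ∪ s')))) (fun c _ hc => hu0 c hc)).symm
    have h2 : ∑ c ∈ S, (if c = bd then y else 0) = y := by
      rw [Finset.sum_ite_eq' S bd (fun _ => y), if_pos (Finset.mem_insert_self bd _)]
    have h3 : ∑ c ∈ S, v c = f x - y := by
      rw [hvsum]
      exact (Finset.sum_subset (hS ▸ (Finset.subset_union_right.trans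
        (Finset.subset_insert bd (s ∪ s')))) (fun c _ hc => hv0 c hc)).symm
    have hsum0 : ∑ c ∈ S, w c = 0 := by
      rw [hw]
      simp only [Finset.sum_sub_distrib]
      rw [h1, h2, h3]
      abel
    have hwbd := aux_internal_sum_zero hinternalM' S w hwmem hsum0 bd
      (Finset.mem_insert_self bd _)
    have hvbd : v bd = 0 := by
      refine hv0 bd (fun h => ?_)
      have := hs' h
      simp only [Set.mem_Iio] at this
      omega
    rw [hw] at hwbd
    simp only [if_pos rfl, hvbd, sub_zero] at hwbd
    exact ⟨u bd, hu bd, by rwa [sub_eq_zero] at hwbd⟩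
  -- tensor-level degree preservation
  have hltmem : ∀ (j : ℕ) (e : ℤ) (x : P j ⊗[R] M), x ∈ tensorDeg (Pgr j) 𝓜 e →
      LinearMap.lTensor (P j) f x ∈ tensorDeg (Pgr j) 𝓜' e := by
    intro j e x hx
    induction hx using AddSubgroup.closure_induction with
    | mem y hy =>
      obtain ⟨a, bd, p, m, habe, hpa, hmb, rfl⟩ := hy
      rw [LinearMap.lTensor_tmul]
      exact AddSubgroup.subset_closure ⟨a, bd, p, f m, habe, hpa, hfgr bd m hmb, rfl⟩
    | zero => simpa using zero_mem _
    | add a b _ _ ha hb => simpa using add_mem ha hb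
    | neg a _ ha => simpa using neg_mem ha
  have hrtmem : ∀ (j : ℕ) (e : ℤ) (x : P (j+1) ⊗[R] M), x ∈ tensorDeg (Pgr (j+1)) 𝓜 e →
      LinearMap.rTensor M (d j) x ∈ tensorDeg (Pgr j) 𝓜 e := by
    intro j e x hx
    induction hx using AddSubgroup.closure_induction with
    | mem y hy =>
      obtain ⟨a, bd, p, m, habe, hpa, hmb, rfl⟩ := hy
      rw [LinearMap.rTensor_tmul]
      exact AddSubgroup.subset_closure ⟨a, bd, d j p, m, habe, hdgr j a p hpa, hmb, rfl⟩
    | zero => simpa using zero_mem _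
    | add a b _ _ ha hb => simpa using add_mem ha hb
    | neg a _ ha => simpa using neg_mem ha
  have hrtmem' : ∀ (j : ℕ) (e : ℤ) (x : P (j+1) ⊗[R] M'), x ∈ tensorDeg (Pgr (j+1)) 𝓜' e →
      LinearMap.rTensor M' (d j) x ∈ tensorDeg (Pgr j) 𝓜' e := by
    intro j e x hx
    induction hx using AddSubgroup.closure_induction with
    | mem y hy =>
      obtain ⟨a, bd, p, m, habe, hpa, hmb, rfl⟩ := hy
      rw [LinearMap.rTensor_tmul]
      exact AddSubgroup.subset_closure ⟨a, bd, d j p, m, habe, hdgr j a p hpa, hmb, rfl⟩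
    | zero => simpa using zero_mem _
    | add a b _ _ ha hb => simpa using add_mem ha hb
    | neg a _ ha => simpa using neg_mem ha
  -- injectivity of lTensor f on the degree-e part, e ≥ n
  have hTDinj : ∀ (j : ℕ) (e : ℤ), n ≤ e → ∀ x ∈ tensorDeg (Pgr j) 𝓜 e,
      LinearMap.lTensor (P j) f x = 0 → x = 0 := by
    intro j e he x hx hfx
    obtain ⟨coords, hc1, hc2, hc3⟩ := aux_tensor_coords 𝒜 hinternalR (Pgr j)
      (hinternalP j) (hsmulP j) (data j).2.1 (degf j) (hbmem j) 𝓜 hsmulM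
    obtain ⟨coords', hc1', hc2', hc3'⟩ := aux_tensor_coords 𝒜 hinternalR (Pgr j)
      (hinternalP j) (hsmulP j) (data j).2.1 (degf j) (hbmem j) 𝓜' hsmulM'
    have hck : ∀ (k) (z : P j ⊗[R] M),
        coords' k (LinearMap.lTensor (P j) f z) = f (coords k z) := by
      intro k z
      induction z with
      | zero => simp
      | tmul p m => rw [LinearMap.lTensor_tmul, hc1', hc1, map_smul]
      | add a b ha hb => simp only [map_add, ha, hb]
    refine hc2 x (fun k => ?_)
    have h1 : f (coords k x) = 0 := by rw [← hck k x, hfx, map_zero]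
    exact hfdeginj (e - degf j k) (by have := hdegle j k; omega) _ (hc3 e x hx k)
      (by rw [h1]; exact Submodule.zero_mem _)
  -- surjectivity of lTensor f on the degree-e part, e ≥ n
  have hTDsurj : ∀ (j : ℕ) (e : ℤ), n ≤ e → ∀ y ∈ tensorDeg (Pgr j) 𝓜' e,
      ∃ x ∈ tensorDeg (Pgr j) 𝓜 e, LinearMap.lTensor (P j) f x = y := by
    intro j e he y hy
    induction hy using AddSubgroup.closure_induction with
    | mem y' hy' =>
      obtain ⟨a, bd, p, m', habe, hpa, hmb, rfl⟩ := hy'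
      by_cases ha : 0 < a
      · have hp0 : p = 0 := aux_pos_bot 𝒜 hinternalR hneg (Pgr j) (hinternalP j)
          (hsmulP j) (data j).2.1 (degf j) (hbmem j) (hdegle j) ha hpa
        exact ⟨0, zero_mem _, by rw [map_zero, hp0, TensorProduct.zero_tmul]⟩
      · obtain ⟨m, hm, hfm⟩ := hfdegsurj bd (by omega) m' hmb
        exact ⟨p ⊗ₜ[R] m, AddSubgroup.subset_closure ⟨a, bd, p, m, habe, hpa, hm, rfl⟩,
          by rw [LinearMap.lTensor_tmul, hfm]⟩
    | zero => exact ⟨0, zero_mem _, by rw [map_zero]⟩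
    | add a b _ _ ha hb =>
      obtain ⟨x₁, hx₁, hf₁⟩ := ha
      obtain ⟨x₂, hx₂, hf₂⟩ := hb
      exact ⟨x₁ + x₂, add_mem hx₁ hx₂, by rw [map_add, hf₁, hf₂]⟩
    | neg a _ ha =>
      obtain ⟨x₁, hx₁, hf₁⟩ := ha
      exact ⟨-x₁, neg_mem hx₁, by rw [map_neg, hf₁]⟩
  -- key injectivity-mod-boundaries
  have key_inj : ∀ (j : ℕ) (e : ℤ), n ≤ e → ∀ x ∈ tensorDeg (Pgr j) 𝓜 e,
      LinearMap.lTensor (P j) f x ∈ LinearMap.range (LinearMap.rTensor M' (d j)) →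
      x ∈ LinearMap.range (LinearMap.rTensor M (d j)) := by
    intro j e he x hx hrange
    obtain ⟨z, hz⟩ := hrange
    have hzmem := aux_tensor_span (Pgr (j+1)) (hinternalP (j+1)) 𝓜' hinternalM' z
    obtain ⟨s, w, -, hw, hw0, hzsum⟩ := aux_closure_decomp _ _ hzmem
    obtain ⟨π, hπmem, hπfix, hπkill⟩ := aux_tensor_proj 𝒜 hinternalR (Pgr j)
      (hinternalP j) (hsmulP j) (data j).2.1 (degf j) (hbmem j) 𝓜' hinternalM' hsmulM' e
    have h1 : LinearMap.lTensor (P j) f x = LinearMap.rTensor M' (d j) (w e) := by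
      have h2 : π (LinearMap.lTensor (P j) f x) = LinearMap.lTensor (P j) f x :=
        hπfix _ (hltmem j e x hx)
      have h3 : π (LinearMap.rTensor M' (d j) z) = LinearMap.rTensor M' (d j) (w e) := by
        rw [hzsum, map_sum, map_sum]
        have h4 : ∀ c ∈ s, π (LinearMap.rTensor M' (d j) (w c)) =
            if c = e then LinearMap.rTensor M' (d j) (w c) else 0 := by
          intro c _
          by_cases h : c = e
          · rw [if_pos h, h]
            exact hπfix _ (hrtmem' j e (w e) (h ▸ hw c))
          · rw [if_neg h]
            exact hπkill c h _ (hrtmem' j c (w c) (hw c))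
        rw [Finset.sum_congr rfl h4, Finset.sum_ite_eq' s e
          (fun c => LinearMap.rTensor M' (d j) (w c))]
        by_cases h : e ∈ s
        · rw [if_pos h]
        · rw [if_neg h, hw0 e h, map_zero]
      rw [← h2, ← hz, h3]
    obtain ⟨x₂, hx₂mem, hx₂⟩ := hTDsurj (j+1) e he (w e) (hw e)
    have hA : (LinearMap.lTensor (P j) f).comp (LinearMap.rTensor M (d j)) =
        (LinearMap.rTensor M' (d j)).comp (LinearMap.lTensor (P (j+1)) f) := by
      rw [LinearMap.lTensor_comp_rTensor, LinearMap.rTensor_comp_lTensor]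
    have h5 : LinearMap.lTensor (P j) f (LinearMap.rTensor M (d j) x₂) =
        LinearMap.lTensor (P j) f x := by
      have := congrArg (fun g => g x₂) hA
      simp only [LinearMap.comp_apply] at this
      rw [this, hx₂, ← h1]
    have h6 : LinearMap.rTensor M (d j) x₂ - x = 0 := by
      refine hTDinj j e he _ (sub_mem (hrtmem j e x₂ hx₂mem) hx) ?_
      rw [map_sub, h5, sub_self]
    exact ⟨x₂, by rw [← sub_eq_zero]; exact h6⟩
  -- assemble
  intro e he
  refine ⟨⟨?_, ?_⟩, ?_⟩
  · intro y hy
    obtain ⟨x, hxmem, hfx⟩ := hTDsurj 0 e he y hy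
    exact ⟨x, hxmem, by rw [hfx, sub_self]; exact Submodule.zero_mem _⟩
  · intro x hx hfx
    exact key_inj 0 e he x hx hfx
  · intro i
    constructor
    · intro y hy hker
      obtain ⟨x, hxmem, hfx⟩ := hTDsurj (i+1) e he y hy
      have hkerx : x ∈ LinearMap.ker (LinearMap.rTensor M (d i)) := by
        rw [LinearMap.mem_ker]
        apply hTDinj i e he _ (hrtmem i e x hxmem)
        have hA : (LinearMap.lTensor (P i) f).comp (LinearMap.rTensor M (d i)) =
            (LinearMap.rTensor M' (d i)).comp (LinearMap.lTensor (P (i+1)) f) := by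
          rw [LinearMap.lTensor_comp_rTensor, LinearMap.rTensor_comp_lTensor]
        have := congrArg (fun g => g x) hA
        simp only [LinearMap.comp_apply] at this
        rw [this, hfx]
        exact LinearMap.mem_ker.1 hker
      exact ⟨x, hxmem, hkerx, by rw [hfx, sub_self]; exact Submodule.zero_mem _⟩
    · intro x hx _ hfx
      exact key_inj (i+1) e he x hx hfx
end

section
/- Let $\Lambda$ be a filtered ring, $L$ a filt-free filtered $\Lambda$-module with filt-basis $(e_i)_{1 \le i \le n}$ and degrees $(k_i)$, i.e. $F_k L = \bigoplus_i (F_{k - k_i}\Lambda) e_i$ for all $k$. Suppose $L = L' \oplus L''$ as filtered modules where $L' = \bigoplus_{i=1}^m \Lambda(-k_i)$ and $L'' = \bigoplus_{j=m+1}^n \Lambda(-\ell_j)$ with $k_i \ge \ell_j$ for all pairs $(i,j)$. Let $P \subseteq L$ be a direct summand (as a $\Lambda$-module) such that the composition $\mathbb F \otimes_\Lambda P \to \mathbb F \otimes_\Lambda L \to \mathbb F \otimes_\Lambda L'$ is an isomorphism, where $\mathbb F$ is the residue field of the local ring $\Lambda$, and assume $P$ decomposes compatibly with an auxiliary semisimple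 group action under which the Jordan–Hölder constituents of $\mathbb F \otimes_\Lambda L'$ and of $\mathbb F \otimes_\Lambda L''$ are disjoint and $P$ is stable. Then $P$, equipped with the filtration induced from $L$, is filt-free and $\mathrm{gr}(P) = \mathrm{gr}(L')$ inside $\mathrm{gr}(L)$. -/
noncomputable section

open IsLocalRing Submodule

theorem mem_iSup_smul_span_iff {Λ : Type*} [CommRing Λ] {L : Type*} [AddCommGroup L]
    [Module Λ L] {n : ℕ} (e : Module.Basis (Fin n) Λ L) (I : Fin n → Ideal Λ) (x : L) :
    x ∈ (⨆ i, I i • Submodule.span Λ {e i}) ↔ ∀ i, e.repr x i ∈ I i := by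
  constructor
  · intro hx i
    have key : (⨆ j, I j • span Λ {e j}) ≤ Submodule.comap (e.coord i) (I i) := by
      refine iSup_le fun j => Submodule.smul_le.2 fun r hr y hy => ?_
      obtain ⟨c, rfl⟩ := Submodule.mem_span_singleton.1 hy
      simp only [Submodule.mem_comap, map_smul, Module.Basis.coord_apply, Module.Basis.repr_self,
        Finsupp.single_apply]
      by_cases h : j = i
      · subst h; simpa using Ideal.mul_mem_right _ _ hr
      · simp [h]
    simpa [Module.Basis.coord_apply] using key hx
  · intro h
    rw [← e.sum_repr x]
    refine Submodule.sum_mem _ fun i _ => Submodule.mem_iSup_of_mem i ?_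
    exact Submodule.smul_mem_smul (h i) (Submodule.mem_span_singleton_self _)


/-- The filtration of a filt-free module with filt-basis `e` and degrees `k`:
`F_c L = ⊕_i (F_{c - k_i} Λ) e_i`, where `F_j Λ = 𝔪^{-j}` for `j ≤ 0` and
`F_j Λ = Λ` for `j ≥ 0` (`𝔪`-adic filtration). -/
def filtFreeFil (Λ : Type) [CommRing Λ] [IsLocalRing Λ] {L : Type} [AddCommGroup L]
    [Module Λ L] {n : ℕ} (e : Module.Basis (Fin n) Λ L) (k : Fin n → ℤ) (c : ℤ) :
    Submodule Λ L :=
  ⨆ i : Fin n, (maximalIdeal Λ ^ (k i - c).toNat) • Submodule.span Λ {e i}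

/-- Lemma 2.2.3 of the paper.  `Λ` is a complete noetherian local ring whose
associated graded ring `gr_𝔪(Λ)` is a domain; `L` is a filt-free `Λ`-module with a
filt-basis `(e_i)_{i<n}` of degrees `k_i`, decomposed as `L = L' ⊕ L''`, where `L'`
is spanned by `(e_i)_{i<m}`, `L''` by `(e_i)_{m≤i<n}`, and `k_i ≥ k_j` whenever
`i < m ≤ j`.  Let `P ⊆ L` be a direct summand such that
`𝔽 ⊗ P → 𝔽 ⊗ L → 𝔽 ⊗ L'` is an isomorphism (stated elementwise modulo `𝔪`), and
such that (the consequence of the auxiliary semisimple group action) for `i < m`,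
writing `e_i = f_i + g_i` with `f_i ∈ P`, `g_i ∈ L''`, one has `g_i ∈ 𝔪 L''`.
Then `P`, with the filtration induced from `L`, is filt-free, and
`gr(P) = gr(L')` inside `gr(L)`. -/
theorem stmt_18 (Λ : Type) [CommRing Λ] [IsNoetherianRing Λ] [IsLocalRing Λ]
    [IsAdicComplete (maximalIdeal Λ) Λ]
    -- `gr_𝔪(Λ)` is a domain:
    (hgrdom : ∀ (i j : ℕ) (a b : Λ), a ∈ maximalIdeal Λ ^ i →
      a ∉ maximalIdeal Λ ^ (i + 1) → b ∈ maximalIdeal Λ ^ j →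
      b ∉ maximalIdeal Λ ^ (j + 1) → a * b ∉ maximalIdeal Λ ^ (i + j + 1))
    {L : Type} [AddCommGroup L] [Module Λ L]
    {n m : ℕ} (hmn : m ≤ n) (e : Module.Basis (Fin n) Λ L) (k : Fin n → ℤ)
    (hdeg : ∀ i j : Fin n, (i : ℕ) < m → m ≤ (j : ℕ) → k j ≤ k i)
    -- the decomposition `L = L' ⊕ L''`:
    (L' L'' : Submodule Λ L)
    (hL' : L' = Submodule.span Λ (e '' {i | (i : ℕ) < m}))
    (hL'' : L'' = Submodule.span Λ (e '' {i | m ≤ (i : ℕ)}))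
    -- `P` is a direct summand of `L`:
    (P : Submodule Λ L) (hsummand : ∃ Q : Submodule Λ L, IsCompl P Q)
    -- `𝔽 ⊗ P → 𝔽 ⊗ L → 𝔽 ⊗ L'` is an isomorphism, where the second map is the
    -- projection `pr` along the decomposition:
    (pr : L →ₗ[Λ] L)
    (hpr : pr = e.constr ℕ fun i => if (i : ℕ) < m then e i else 0)
    (hsurjres : ∀ y ∈ L', ∃ x ∈ P, y - pr x ∈ maximalIdeal Λ • L')
    (hinjres : ∀ x ∈ P, pr x ∈ maximalIdeal Λ • L' → x ∈ maximalIdeal Λ • P)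
    -- consequence of the auxiliary `H`-action:
    (hH : ∀ i : Fin n, (i : ℕ) < m → ∀ x ∈ P, e i - x ∈ L'' →
      e i - x ∈ maximalIdeal Λ • L'') :
    -- `P` with the induced filtration is filt-free:
    (∃ (m' : ℕ) (b : Module.Basis (Fin m') Λ P) (c : Fin m' → ℤ), ∀ deg : ℤ,
      P ⊓ filtFreeFil Λ e k deg =
        ⨆ i : Fin m', (maximalIdeal Λ ^ (c i - deg).toNat) •
          Submodule.span Λ {((b i : P) : L)}) ∧
    -- `gr(P) = gr(L')` inside `gr(L)`:
    (∀ deg : ℤ,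
      (P ⊓ filtFreeFil Λ e k deg) ⊔ filtFreeFil Λ e k (deg - 1) =
      (L' ⊓ filtFreeFil Λ e k deg) ⊔ filtFreeFil Λ e k (deg - 1)) := by
  classical
  set 𝔪 := maximalIdeal Λ with h𝔪
  haveI : Module.Finite Λ L := Module.Finite.of_basis e
  haveI : IsNoetherian Λ L := isNoetherian_of_isNoetherianRing_of_finite Λ L
  have hpre : ∀ j : Fin n, pr (e j) = if (j : ℕ) < m then e j else 0 := by
    intro j; rw [hpr, Module.Basis.constr_basis]
  -- coordinates of elements of L'' below m vanish
  have hcoordL'' : ∀ y ∈ L'', ∀ j : Fin n, (j : ℕ) < m → e.repr y j = 0 := by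
    intro y hy j hj
    have : L'' ≤ LinearMap.ker (e.coord j) := by
      rw [hL'', span_le]
      rintro x ⟨i, hi, rfl⟩
      simp only [SetLike.mem_coe, LinearMap.mem_ker, Module.Basis.coord_apply, Module.Basis.repr_self, Finsupp.single_apply]
      have : i ≠ j := fun h => absurd (h ▸ hi) (by simpa using Nat.not_le.2 hj)
      simp [this]
    have := this hy
    rwa [LinearMap.mem_ker, Module.Basis.coord_apply] at this
  -- coordinates of elements of L' at ≥ m vanish
  have hcoordL' : ∀ y ∈ L', ∀ j : Fin n, m ≤ (j : ℕ) → e.repr y j = 0 := by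
    intro y hy j hj
    have : L' ≤ LinearMap.ker (e.coord j) := by
      rw [hL', span_le]
      rintro x ⟨i, hi, rfl⟩
      simp only [SetLike.mem_coe, LinearMap.mem_ker, Module.Basis.coord_apply, Module.Basis.repr_self, Finsupp.single_apply]
      have : i ≠ j := fun h => absurd (h ▸ hi) (by simpa using hj)
      simp [this]
    have := this hy
    rwa [LinearMap.mem_ker, Module.Basis.coord_apply] at this
  -- pr as a sum
  have hprsum : ∀ x : L, pr x = ∑ j, e.repr x j • pr (e j) := by
    intro x
    conv_lhs => rw [← e.sum_repr x]
    rw [map_sum]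
    simp_rw [map_smul]
  -- x - pr x ∈ L''
  have hsub : ∀ x : L, x - pr x ∈ L'' := by
    intro x
    have hx : x - pr x = ∑ j, e.repr x j • (e j - pr (e j)) := by
      simp_rw [smul_sub]
      rw [Finset.sum_sub_distrib, e.sum_repr, ← hprsum]
    rw [hx]
    refine sum_mem fun j _ => Submodule.smul_mem _ _ ?_
    rw [hpre]
    by_cases h : (j : ℕ) < m
    · simp [h]
    · simp only [h, if_false, sub_zero]
      rw [hL'']
      exact subset_span ⟨j, by simpa using h, rfl⟩
  -- pr vanishes on L''
  have hprL'' : ∀ y ∈ L'', pr y = 0 := by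
    intro y hy
    have : L'' ≤ LinearMap.ker pr := by
      rw [hL'', span_le]
      rintro x ⟨i, hi, rfl⟩
      simp only [Set.mem_setOf_eq] at hi
      rw [SetLike.mem_coe, LinearMap.mem_ker, hpre]
      simp [Nat.not_lt.2 hi]
    exact this hy
  -- pr x ∈ L'
  have hprL' : ∀ x : L, pr x ∈ L' := by
    intro x
    rw [hprsum x]
    refine sum_mem fun j _ => ?_
    rw [hpre]
    by_cases h : (j : ℕ) < m
    · simp only [h, if_true]
      exact Submodule.smul_mem _ _ (hL' ▸ subset_span ⟨j, h, rfl⟩)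
    · simp [h]
  -- Nakayama: L' ≤ pr(P)
  have hPmap : L' ≤ Submodule.map pr P := by
    refine Submodule.le_of_le_smul_of_le_jacobson_bot (IsNoetherian.noetherian L')
      (IsLocalRing.maximalIdeal_le_jacobson ⊥) fun y hy => ?_
    obtain ⟨x, hxP, hxy⟩ := hsurjres y hy
    have : y = pr x + (y - pr x) := by abel
    rw [this]
    exact Submodule.add_mem_sup ⟨x, hxP, rfl⟩ hxy
  -- choice of v
  have key : ∀ i : Fin n, ∃ w : L, ((i : ℕ) < m → w ∈ P ∧ e i - w ∈ 𝔪 • L'') ∧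
      (¬ (i : ℕ) < m → w = e i) := by
    intro i
    by_cases hi : (i : ℕ) < m
    · have hei : e i ∈ L' := by rw [hL']; exact subset_span ⟨i, hi, rfl⟩
      obtain ⟨x, hxP, hx⟩ := Submodule.mem_map.1 (hPmap hei)
      refine ⟨x, fun _ => ⟨hxP, ?_⟩, fun h => absurd hi h⟩
      refine hH i hi x hxP ?_
      have : e i - x = -(x - pr x) := by rw [hx]; abel
      rw [this]
      exact neg_mem (hsub x)
    · exact ⟨e i, fun h => absurd h hi, fun _ => rfl⟩
  choose v hv1 hv2 using key
  have hgmem : ∀ i : Fin n, e i - v i ∈ 𝔪 • L'' := by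
    intro i
    by_cases hi : (i : ℕ) < m
    · exact (hv1 i hi).2
    · rw [hv2 i hi]; simp
  have hvP : ∀ i : Fin n, (i : ℕ) < m → v i ∈ P := fun i hi => (hv1 i hi).1
  have hg𝔪 : ∀ i j : Fin n, e.repr (e i - v i) j ∈ 𝔪 := by
    intro i j
    have hle : 𝔪 • L'' ≤ Submodule.comap (e.coord j) 𝔪 := by
      refine Submodule.smul_le.2 fun r hr y _ => ?_
      simp only [Submodule.mem_comap, map_smul, smul_eq_mul]
      exact Ideal.mul_mem_right _ _ hr
    have := hle (hgmem i)
    simpa [Module.Basis.coord_apply] using this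
  have hg0 : ∀ i j : Fin n, (j : ℕ) < m → e.repr (e i - v i) j = 0 := fun i j hj =>
    hcoordL'' _ (Submodule.smul_le_right (hgmem i)) j hj
  have hvrep : ∀ i j : Fin n, e.repr (v i) j =
      (if i = j then (1 : Λ) else 0) - e.repr (e i - v i) j := by
    intro i j
    have h1 : e i - (e i - v i) = v i := by abel
    conv_lhs => rw [← h1]
    rw [map_sub, Finsupp.sub_apply, e.repr_self, Finsupp.single_apply]
  have hv_lt : ∀ i j : Fin n, (j : ℕ) < m → e.repr (v i) j = if i = j then 1 else 0 := by
    intro i j hj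
    rw [hvrep, hg0 i j hj, sub_zero]
  have hreprsum : ∀ (a : Fin n → Λ) (x : Fin n → L) (j : Fin n),
      e.repr (∑ i, a i • x i) j = ∑ i, a i * e.repr (x i) j := by
    intro a x j
    rw [map_sum, Finsupp.finset_sum_apply]
    simp_rw [map_smul, Finsupp.smul_apply, smul_eq_mul]
  have hindep : LinearIndependent Λ v := by
    rw [Fintype.linearIndependent_iff]
    intro a ha
    have h1 : ∀ j : Fin n, (j : ℕ) < m → a j = 0 := by
      intro j hj
      have h2 := congrArg (fun z : L => e.repr z j) ha
      simp only [map_zero, Finsupp.zero_apply] at h2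
      rw [hreprsum] at h2
      rw [Finset.sum_eq_single j] at h2
      · rwa [hv_lt j j hj, if_pos rfl, mul_one] at h2
      · intro i _ hij
        rw [hv_lt i j hj, if_neg hij, mul_zero]
      · intro h; exact absurd (Finset.mem_univ j) h
    intro j
    by_cases hj : (j : ℕ) < m
    · exact h1 j hj
    · have h2 := congrArg (fun z : L => e.repr z j) ha
      simp only [map_zero, Finsupp.zero_apply] at h2
      rw [hreprsum] at h2
      rw [Finset.sum_eq_single j] at h2
      · rw [hv2 j hj] at h2
        rwa [e.repr_self, Finsupp.single_apply, if_pos rfl, mul_one] at h2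
      · intro i _ hij
        by_cases hi : (i : ℕ) < m
        · rw [h1 i hi, zero_mul]
        · rw [hv2 i hi, e.repr_self, Finsupp.single_apply, if_neg hij, mul_zero]
      · intro h; exact absurd (Finset.mem_univ j) h
  have hL''v : L'' ≤ span Λ (Set.range v) := by
    rw [hL'', span_le]
    rintro x ⟨i, hi, rfl⟩
    rw [← hv2 i (Nat.not_lt.2 hi)]
    exact subset_span ⟨i, rfl⟩
  have hspan : ⊤ ≤ span Λ (Set.range v) := by
    rw [← e.span_eq]
    refine span_le.2 ?_
    rintro x ⟨j, rfl⟩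
    by_cases hj : (j : ℕ) < m
    · have h1 : e j = v j + (e j - v j) := by abel
      rw [h1]
      exact add_mem (subset_span ⟨j, rfl⟩) (hL''v (Submodule.smul_le_right (hgmem j)))
    · rw [← hv2 j hj]
      exact subset_span ⟨j, rfl⟩
  set b0 : Module.Basis (Fin n) Λ L := Module.Basis.mk hindep hspan with hb0def
  have hb0 : ∀ i, b0 i = v i := fun i => Module.Basis.mk_apply hindep hspan i
  have hb0coord : ∀ x ∈ span Λ (v '' {i : Fin n | (i : ℕ) < m}), ∀ j : Fin n,
      ¬ (j : ℕ) < m → b0.repr x j = 0 := by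
    intro x hx j hj
    have hle : span Λ (v '' {i : Fin n | (i : ℕ) < m}) ≤ LinearMap.ker (b0.coord j) := by
      rw [span_le]
      rintro y ⟨i, hi, rfl⟩
      have hvb : v i = b0 i := (hb0 i).symm
      simp only [SetLike.mem_coe, LinearMap.mem_ker, Module.Basis.coord_apply, hvb,
        Module.Basis.repr_self, Finsupp.single_apply]
      have : i ≠ j := fun h => hj (h ▸ hi)
      simp [this]
    have := hle hx
    rwa [LinearMap.mem_ker, Module.Basis.coord_apply] at this
  have hPeq : P = span Λ (v '' {i : Fin n | (i : ℕ) < m}) := by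
    refine le_antisymm ?_ (span_le.2 ?_)
    swap
    · rintro x ⟨i, hi, rfl⟩
      exact hvP i hi
    refine Submodule.le_of_le_smul_of_le_jacobson_bot (IsNoetherian.noetherian P)
      (IsLocalRing.maximalIdeal_le_jacobson ⊥) fun x hx => ?_
    have hxsum : x = ∑ i, b0.repr x i • v i := by
      conv_lhs => rw [← b0.sum_repr x]
      simp_rw [hb0]
    set s₁ : L := ∑ i ∈ Finset.univ.filter (fun i : Fin n => (i : ℕ) < m),
      b0.repr x i • v i with hs₁
    set s₂ : L := ∑ i ∈ Finset.univ.filter (fun i : Fin n => ¬ (i : ℕ) < m),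
      b0.repr x i • v i with hs₂
    have hsplit : x = s₁ + s₂ := by
      rw [hxsum, hs₁, hs₂, Finset.sum_filter_add_sum_filter_not]
    have hs₁mem : s₁ ∈ span Λ (v '' {i : Fin n | (i : ℕ) < m}) := by
      refine sum_mem fun i hi => Submodule.smul_mem _ _ (subset_span ⟨i, ?_, rfl⟩)
      simpa using (Finset.mem_filter.1 hi).2
    have hs₁P : s₁ ∈ P := by
      refine sum_mem fun i hi => Submodule.smul_mem _ _ (hvP i ?_)
      simpa using (Finset.mem_filter.1 hi).2
    have hs₂P : s₂ ∈ P := by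
      have h : s₂ = x - s₁ := by rw [hsplit]; abel
      rw [h]
      exact sub_mem hx hs₁P
    have hs₂L'' : s₂ ∈ L'' := by
      refine sum_mem fun i hi => Submodule.smul_mem _ _ ?_
      have hi' := (Finset.mem_filter.1 hi).2
      rw [hv2 i hi', hL'']
      exact subset_span ⟨i, Nat.not_lt.1 hi', rfl⟩
    have hs₂𝔪 : s₂ ∈ 𝔪 • P :=
      hinjres s₂ hs₂P (by rw [hprL'' s₂ hs₂L'']; exact zero_mem _)
    rw [hsplit]
    exact Submodule.add_mem_sup hs₁mem hs₂𝔪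
  -- basis of P
  have hvPmem : ∀ i : Fin m, v (Fin.castLE hmn i) ∈ P := fun i => hvP _ i.isLt
  set w : Fin m → P := fun i => ⟨v (Fin.castLE hmn i), hvPmem i⟩ with hwdef
  have hw_indep : LinearIndependent Λ w := by
    have h1 : LinearIndependent Λ (v ∘ Fin.castLE hmn) :=
      hindep.comp _ (Fin.castLE_injective hmn)
    have h2 : P.subtype ∘ w = v ∘ Fin.castLE hmn := rfl
    exact LinearIndependent.of_comp P.subtype (h2 ▸ h1)
  have himage : Set.range (P.subtype ∘ w) = v '' {i : Fin n | (i : ℕ) < m} := by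
    ext x
    constructor
    · rintro ⟨i, rfl⟩
      exact ⟨Fin.castLE hmn i, i.isLt, rfl⟩
    · rintro ⟨i, hi, rfl⟩
      exact ⟨⟨(i : ℕ), hi⟩, congrArg v (Fin.ext rfl)⟩
  have hw_span : ⊤ ≤ span Λ (Set.range w) := by
    have hmapeq : Submodule.map P.subtype (span Λ (Set.range w)) =
        Submodule.map P.subtype ⊤ := by
      rw [Submodule.map_span, ← Set.range_comp, himage, Submodule.map_top,
        Submodule.range_subtype, ← hPeq]
    exact le_of_eq (Submodule.map_injective_of_injective P.injective_subtype hmapeq).symm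
  set b : Module.Basis (Fin m) Λ P := Module.Basis.mk hw_indep hw_span with hbdef
  have hbL : ∀ i, ((b i : P) : L) = v (Fin.castLE hmn i) := fun i => by
    rw [hbdef, Module.Basis.mk_apply]
  -- membership in the filtration via coordinates
  have hF : ∀ (deg : ℤ) (x : L), x ∈ filtFreeFil Λ e k deg ↔
      ∀ j, e.repr x j ∈ 𝔪 ^ (k j - deg).toNat := fun deg x =>
    mem_iSup_smul_span_iff e _ x
  -- a • v i ∈ F deg
  have hVF : ∀ (deg : ℤ) (i : Fin n), (i : ℕ) < m → ∀ a ∈ 𝔪 ^ (k i - deg).toNat,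
      a • v i ∈ filtFreeFil Λ e k deg := by
    intro deg i hi a ha
    rw [hF]
    intro j
    rw [map_smul, Finsupp.smul_apply, smul_eq_mul]
    by_cases hj : (j : ℕ) < m
    · rw [hv_lt i j hj]
      by_cases hij : i = j
      · subst hij; simpa using ha
      · simp [hij]
    · rw [hvrep i j, if_neg (by rintro rfl; exact hj hi), zero_sub, mul_neg]
      refine neg_mem ?_
      have h1 : a * e.repr (e i - v i) j ∈ 𝔪 ^ ((k i - deg).toNat + 1) := by
        rw [pow_succ]
        exact Ideal.mul_mem_mul ha (hg𝔪 i j)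
      refine Ideal.pow_le_pow_right ?_ h1
      have := hdeg i j hi (Nat.not_lt.1 hj)
      omega
  -- a • (e i - v i) ∈ F (deg - 1)
  have hGF : ∀ (deg : ℤ) (i : Fin n), (i : ℕ) < m → ∀ a ∈ 𝔪 ^ (k i - deg).toNat,
      a • (e i - v i) ∈ filtFreeFil Λ e k (deg - 1) := by
    intro deg i hi a ha
    rw [hF]
    intro j
    rw [map_smul, Finsupp.smul_apply, smul_eq_mul]
    by_cases hj : (j : ℕ) < m
    · rw [hg0 i j hj, mul_zero]; exact zero_mem _
    · have h1 : a * e.repr (e i - v i) j ∈ 𝔪 ^ ((k i - deg).toNat + 1) := by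
        rw [pow_succ]
        exact Ideal.mul_mem_mul ha (hg𝔪 i j)
      refine Ideal.pow_le_pow_right ?_ h1
      have := hdeg i j hi (Nat.not_lt.1 hj)
      omega
  -- a • e i ∈ F deg
  have hEF : ∀ (deg : ℤ) (i : Fin n), ∀ a ∈ 𝔪 ^ (k i - deg).toNat,
      a • e i ∈ filtFreeFil Λ e k deg := by
    intro deg i a ha
    rw [hF]
    intro j
    rw [map_smul, Finsupp.smul_apply, smul_eq_mul, e.repr_self, Finsupp.single_apply]
    by_cases hij : i = j
    · subst hij; simpa using ha
    · simp [hij]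
  -- main filtration computation
  have hmain : ∀ deg : ℤ, P ⊓ filtFreeFil Λ e k deg =
      ⨆ i : Fin m, (𝔪 ^ (k (Fin.castLE hmn i) - deg).toNat) •
        span Λ {v (Fin.castLE hmn i)} := by
    intro deg
    refine le_antisymm ?_ (iSup_le fun i => le_inf ?_ ?_)
    · intro x hx
      rw [Submodule.mem_inf] at hx
      obtain ⟨hxP, hxF⟩ := hx
      have hxc : ∀ j, e.repr x j ∈ 𝔪 ^ (k j - deg).toNat := (hF deg x).1 hxF
      have hb0x : ∀ j : Fin n, ¬ (j : ℕ) < m → b0.repr x j = 0 :=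
        hb0coord x (hPeq ▸ hxP)
      have hxsum : x = ∑ i, b0.repr x i • v i := by
        conv_lhs => rw [← b0.sum_repr x]
        simp_rw [hb0]
      have hxe : ∀ j : Fin n, (j : ℕ) < m → b0.repr x j = e.repr x j := by
        intro j hj
        have h2 : e.repr x j = ∑ i, b0.repr x i * e.repr (v i) j := by
          conv_lhs => rw [hxsum]
          exact hreprsum _ _ j
        rw [h2, Finset.sum_eq_single j]
        · rw [hv_lt j j hj, if_pos rfl, mul_one]
        · intro i _ hij
          by_cases hi : (i : ℕ) < m
          · rw [hv_lt i j hj, if_neg hij, mul_zero]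
          · rw [hb0x i hi, zero_mul]
        · intro h; exact absurd (Finset.mem_univ j) h
      rw [hxsum]
      refine sum_mem fun i _ => ?_
      by_cases hi : (i : ℕ) < m
      · refine Submodule.mem_iSup_of_mem ⟨(i : ℕ), hi⟩ ?_
        have hcast : Fin.castLE hmn ⟨(i : ℕ), hi⟩ = i := Fin.ext rfl
        rw [hcast]
        refine Submodule.smul_mem_smul ?_ (mem_span_singleton_self _)
        rw [hxe i hi]
        exact hxc i
      · rw [hb0x i hi, zero_smul]
        exact zero_mem _
    · exact Submodule.smul_le_right.trans
        ((span_singleton_le_iff_mem _ _).2 (hvP _ (by simpa using i.isLt)))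
    · refine Submodule.smul_le.2 fun r hr y hy => ?_
      obtain ⟨c, rfl⟩ := mem_span_singleton.1 hy
      rw [smul_smul]
      exact hVF deg _ (by simpa using i.isLt) _ (Ideal.mul_mem_right _ _ hr)
  -- gr(P) = gr(L')
  have hgr : ∀ deg : ℤ,
      (P ⊓ filtFreeFil Λ e k deg) ⊔ filtFreeFil Λ e k (deg - 1) =
      (L' ⊓ filtFreeFil Λ e k deg) ⊔ filtFreeFil Λ e k (deg - 1) := by
    intro deg
    refine le_antisymm (sup_le ?_ le_sup_right) (sup_le ?_ le_sup_right)
    · rw [hmain deg]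
      refine iSup_le fun i => Submodule.smul_le.2 fun r hr y hy => ?_
      obtain ⟨c, rfl⟩ := mem_span_singleton.1 hy
      rw [smul_smul]
      have hi' : ((Fin.castLE hmn i : Fin n) : ℕ) < m := by simpa using i.isLt
      have ha : r * c ∈ 𝔪 ^ (k (Fin.castLE hmn i) - deg).toNat :=
        Ideal.mul_mem_right _ _ hr
      have hsplit : (r * c) • v (Fin.castLE hmn i) =
          (r * c) • e (Fin.castLE hmn i) -
          (r * c) • (e (Fin.castLE hmn i) - v (Fin.castLE hmn i)) := by
        rw [← smul_sub]
        congr 1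
        abel
      rw [hsplit]
      refine sub_mem (Submodule.mem_sup_left (Submodule.mem_inf.2 ⟨?_, hEF deg _ _ ha⟩))
        (Submodule.mem_sup_right (hGF deg _ hi' _ ha))
      refine Submodule.smul_mem _ _ ?_
      rw [hL']
      exact subset_span ⟨Fin.castLE hmn i, hi', rfl⟩
    · intro x hx
      rw [Submodule.mem_inf] at hx
      obtain ⟨hxL', hxF⟩ := hx
      have hxc := (hF deg x).1 hxF
      have hx0 : ∀ j : Fin n, ¬ (j : ℕ) < m → e.repr x j = 0 := fun j hj =>
        hcoordL' x hxL' j (Nat.not_lt.1 hj)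
      have hxsum : x = ∑ j, e.repr x j • e j := (e.sum_repr x).symm
      rw [hxsum]
      refine sum_mem fun j _ => ?_
      by_cases hj : (j : ℕ) < m
      · have hsplit : e.repr x j • e j = e.repr x j • v j + e.repr x j • (e j - v j) := by
          rw [← smul_add]
          congr 1
          abel
        rw [hsplit]
        exact add_mem
          (Submodule.mem_sup_left (Submodule.mem_inf.2
            ⟨Submodule.smul_mem _ _ (hvP j hj), hVF deg j hj _ (hxc j)⟩))
          (Submodule.mem_sup_right (hGF deg j hj _ (hxc j)))
      · rw [hx0 j hj, zero_smul]
        exact zero_mem _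
  refine ⟨⟨m, b, fun i => k (Fin.castLE hmn i), fun deg => ?_⟩, hgr⟩
  rw [hmain deg]
  simp_rw [hbL]

end
end

section
/- Let $R$ be a filtered ring with Rees ring $\widetilde R = \bigoplus_{n} (F_n R) X^n$, and for a graded $\widetilde R$-module $W$ let $\mathcal E(W) := W/(1-X)W$ be its dehomogenization, a filtered $R$-module with $F_n \mathcal E(W) = (W_n + (1-X)W)/(1-X)W$. If $N_1 \to N_2 \to N_3$ is an exact sequence of graded $\widetilde R$-modules and $N_3$ is $X$-torsion-free, then the induced sequence $\mathcal E(N_1) \to \mathcal E(N_2) \to \mathcal E(N_3)$ of filtered $R$-modules is exact and the first morphism is strict (i.e. the image of $F_n\mathcal E(N_1)$ equals the intersection of the image with $F_n \mathcal E(N_2)$ for all $n$). In particular, if $N_1 \to N_2$ is a surjection of graded $\widetilde R$-modules, then $\mathcal E(N_1) \to \mathcal E(N_2)$ is a strict surjection. -/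
/-!
Write `T` for multiplication by `X`, an endomorphism of degree one of each graded module `W`.
Two facts about `(1 - T) W` carry the argument. Every `w` is congruent modulo `(1 - T) W` to a
homogeneous element, obtained by raising all components of `w` to a common degree with powers
of `T`. If `T` is injective, a homogeneous `z = v - T v` of degree `n` vanishes: comparing
components, `v_j = T v_{j-1}` for `j ≠ n`, so the components of `v` below `n` vanish by upward
induction from below its support, while `v_{n+k} = T^k v_n` vanishes for large `k`, forcing
`v_n = 0`.

For exactness, homogenize `y` to `y'`; then `g y'` is homogeneous and lies in `(1 - X) N₃`, so
it is zero and `y'` comes from `N₁`. For strictness, a homogeneous element of the image of `f`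
is the image of the component of the same degree of any preimage.
-/

noncomputable section

variable (R : Type) [Ring R] (F : ℤ → AddSubgroup R)

/-- The Rees ring `R̃ = ⊕_n (F_n R) Xⁿ` of a filtered ring `(R, F)`, realized as the
subring of the Laurent polynomial ring `R[X, X⁻¹] = AddMonoidAlgebra R ℤ` consisting
of those elements whose `n`-th coefficient lies in `F n` for every `n`. -/
def ReesSubring (hone : (1 : R) ∈ F 0)
    (hmul : ∀ {m n : ℤ} {a b : R}, a ∈ F m → b ∈ F n → a * b ∈ F (m + n)) :
    Subring (AddMonoidAlgebra R ℤ) where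
  carrier := {f | ∀ n : ℤ, f.coeff n ∈ F n}
  zero_mem' := fun n => by simpa using zero_mem (F n)
  one_mem' := fun n => by
    classical
    rw [AddMonoidAlgebra.one_def, AddMonoidAlgebra.coeff_single, Finsupp.single_apply]
    split_ifs with h
    · exact h ▸ hone
    · exact zero_mem _
  add_mem' := fun {a b} ha hb n => by
    rw [AddMonoidAlgebra.coeff_add, Finsupp.add_apply]; exact add_mem (ha n) (hb n)
  neg_mem' := fun {a} ha n => by
    rw [AddMonoidAlgebra.coeff_neg, Finsupp.neg_apply]; exact neg_mem (ha n)
  mul_mem' := fun {a b} ha hb n => by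
    classical
    rw [AddMonoidAlgebra.coeff_mul]
    refine sum_mem fun i _ => sum_mem fun j _ => ?_
    show (if i + j = n then a.coeff i * b.coeff j else 0) ∈ F n
    split_ifs with h
    · exact h ▸ hmul (ha i) (hb j)
    · exact zero_mem _

variable (hone : (1 : R) ∈ F 0)
  (hmul : ∀ {m n : ℤ} {a b : R}, a ∈ F m → b ∈ F n → a * b ∈ F (m + n))
  (hmono : Monotone F)

/-- The degree-`n` homogeneous part of the Rees ring. -/
def ReesDeg (n : ℤ) : AddSubgroup (ReesSubring R F hone hmul) where
  carrier := {f | ∀ i : ℤ, i ≠ n → (f : AddMonoidAlgebra R ℤ).coeff i = 0}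
  zero_mem' := fun i _ => by simp
  add_mem' := fun {a b} ha hb i hi => by
    show ((a : AddMonoidAlgebra R ℤ) + (b : AddMonoidAlgebra R ℤ)).coeff i = 0
    rw [AddMonoidAlgebra.coeff_add, Finsupp.add_apply, ha i hi, hb i hi, add_zero]
  neg_mem' := fun {a} ha i hi => by
    show (-(a : AddMonoidAlgebra R ℤ)).coeff i = 0
    rw [AddMonoidAlgebra.coeff_neg, Finsupp.neg_apply, ha i hi, neg_zero]

/-- The canonical homogeneous element `X` of degree `1` of the Rees ring. -/
def XRees : ReesSubring R F hone hmul :=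
  ⟨AddMonoidAlgebra.single 1 1, by
    classical
    intro n
    rw [AddMonoidAlgebra.coeff_single, Finsupp.single_apply]
    split_ifs with h
    · exact h ▸ hmono (by norm_num : (0 : ℤ) ≤ 1) hone
    · exact zero_mem _⟩

/-- `(1 - X) W ⊆ W`: the kernel of the dehomogenization `W → ℰ(W) = W/(1-X)W`. -/
def oneSubXSub (W : Type) [AddCommGroup W] [Module (ReesSubring R F hone hmul) W] :
    Submodule (ReesSubring R F hone hmul) W :=
  Submodule.span _ {w | ∃ v : W, w = v - XRees R F hone hmul hmono • v}

namespace DirectSum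

variable {W W₁ W₂ : Type*} [AddCommGroup W] [AddCommGroup W₁] [AddCommGroup W₂]

theorem coe_decompose_map_add_of_shift {𝒲₁ : ℤ → AddSubgroup W₁} {𝒲₂ : ℤ → AddSubgroup W₂}
    [Decomposition 𝒲₁] [Decomposition 𝒲₂] (f : W₁ →+ W₂) (d : ℤ)
    (hf : ∀ i, ∀ x ∈ 𝒲₁ i, f x ∈ 𝒲₂ (i + d)) (x : W₁) (j : ℤ) :
    (decompose 𝒲₂ (f x) (j + d) : W₂) = f (decompose 𝒲₁ x j) := by
  induction x using Decomposition.inductionOn 𝒲₁ with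
  | zero => simp
  | @homogeneous i x =>
    obtain ⟨x, hx⟩ := x
    by_cases hij : i = j
    · subst hij
      rw [decompose_of_mem_same _ (hf _ _ hx), decompose_of_mem_same _ hx]
    · rw [decompose_of_mem_ne _ (hf _ _ hx) (by omega), decompose_of_mem_ne _ hx hij, map_zero]
  | add x y hx hy => simp only [map_add, decompose_add, add_apply, AddSubgroup.coe_add, hx, hy]

theorem exists_mem_map_eq_of_map_mem {𝒲₁ : ℤ → AddSubgroup W₁} {𝒲₂ : ℤ → AddSubgroup W₂}
    [Decomposition 𝒲₁] [Decomposition 𝒲₂] (f : W₁ →+ W₂)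
    (hf : ∀ i, ∀ x ∈ 𝒲₁ i, f x ∈ 𝒲₂ i) {n : ℤ} {x : W₁} (hx : f x ∈ 𝒲₂ n) :
    ∃ x' ∈ 𝒲₁ n, f x' = f x := by
  refine ⟨decompose 𝒲₁ x n, (decompose 𝒲₁ x n).2, ?_⟩
  rw [← coe_decompose_map_add_of_shift f 0 (by simpa using hf) x n, add_zero,
    decompose_of_mem_same _ hx]

variable {𝒲 : ℤ → AddSubgroup W} (T : W →+ W)

theorem exists_mem_sub_mem_range_of_le (hT : ∀ i, ∀ x ∈ 𝒲 i, T x ∈ 𝒲 (i + 1)) {n m : ℤ} {x : W}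
    (hx : x ∈ 𝒲 n) (hnm : n ≤ m) :
    ∃ x' ∈ 𝒲 m, x - x' ∈ (AddMonoidHom.id W - T).range := by
  induction m, hnm using Int.leInduction with
  | base => exact ⟨x, hx, by simp⟩
  | succ m _ ih =>
    obtain ⟨x', hx', hxx'⟩ := ih
    refine ⟨T x', hT m x' hx', ?_⟩
    rw [← sub_add_sub_cancel x x' (T x')]
    exact add_mem hxx' ⟨x', rfl⟩

theorem exists_mem_sub_mem_range [Decomposition 𝒲] (hT : ∀ i, ∀ x ∈ 𝒲 i, T x ∈ 𝒲 (i + 1))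
    (w : W) :
    ∃ n, ∃ w' ∈ 𝒲 n, w - w' ∈ (AddMonoidHom.id W - T).range := by
  induction w using Decomposition.inductionOn 𝒲 with
  | zero => exact ⟨0, 0, zero_mem _, by simp⟩
  | @homogeneous i w => exact ⟨i, w, w.2, by simp⟩
  | add w₁ w₂ h₁ h₂ =>
    obtain ⟨n₁, w₁', hw₁', h₁⟩ := h₁
    obtain ⟨n₂, w₂', hw₂', h₂⟩ := h₂
    obtain ⟨w₁'', hw₁'', h₁'⟩ := exists_mem_sub_mem_range_of_le T hT hw₁' (le_max_left n₁ n₂)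
    obtain ⟨w₂'', hw₂'', h₂'⟩ := exists_mem_sub_mem_range_of_le T hT hw₂' (le_max_right n₁ n₂)
    refine ⟨max n₁ n₂, w₁'' + w₂'', add_mem hw₁'' hw₂'', ?_⟩
    rw [show w₁ + w₂ - (w₁'' + w₂'') = (w₁ - w₁' + (w₁' - w₁'')) + (w₂ - w₂' + (w₂' - w₂''))
      by abel]
    exact add_mem (add_mem h₁ h₁') (add_mem h₂ h₂')

theorem eq_zero_of_mem_of_eq_sub_map [Decomposition 𝒲] (hT : ∀ i, ∀ x ∈ 𝒲 i, T x ∈ 𝒲 (i + 1))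
    (hinj : Function.Injective T) {n : ℤ} {z v : W} (hz : z ∈ 𝒲 n) (hzv : z = v - T v) : z = 0 := by
  set c : ℤ → W := fun j => decompose 𝒲 v j
  have hcomp : ∀ j, (decompose 𝒲 z (j + 1) : W) = c (j + 1) - T (c j) := fun j => by
    rw [hzv, decompose_sub, sub_apply, AddSubgroup.coe_sub,
      coe_decompose_map_add_of_shift T 1 hT]
  have hrec : ∀ j, j + 1 ≠ n → c (j + 1) = T (c j) := fun j hj => by
    rw [← sub_eq_zero, ← hcomp, decompose_of_mem_ne _ hz (Ne.symm hj)]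
  have hfin : (Function.support c).Finite := hasFiniteSupport 𝒲 (decompose 𝒲 v)
  obtain ⟨A, hA⟩ := hfin.bddBelow
  obtain ⟨B, hB⟩ := hfin.bddAbove
  have hlow : ∀ j < A, c j = 0 := fun j hj => by_contra fun h => (hA h).not_gt hj
  have hhigh : ∀ j > B, c j = 0 := fun j hj => by_contra fun h => (hB h).not_gt hj
  have hbelow : ∀ j, A - 1 ≤ j → j < n → c j = 0 := by
    intro j hj
    induction j, hj using Int.leInduction with
    | base => exact fun _ => hlow _ (by omega)
    | succ j _ ih => intro hjn; rw [hrec j (by omega), ih (by omega), map_zero]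
  have habove : ∀ k : ℕ, c (n + k) = T^[k] (c n) := by
    intro k
    induction k with
    | zero => simp
    | succ k ih =>
      rw [Function.iterate_succ_apply', ← ih, Nat.cast_succ, ← add_assoc, hrec _ (by omega)]
  have hcn : c n = 0 := by
    apply hinj.iterate (B - n + 1).toNat
    rw [← habove, iterate_map_zero]
    exact hhigh _ (by omega)
  have hcn' : c (n - 1) = 0 := by
    rcases lt_or_ge (n - 1) A with h | h
    · exact hlow _ h
    · exact hbelow _ (by omega) (by omega)
  have := hcomp (n - 1)
  rwa [sub_add_cancel, decompose_of_mem_same _ hz, hcn, hcn', map_zero, sub_zero] at this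

end DirectSum

section Rees

variable {R F hone hmul hmono}

theorem XRees_mem_ReesDeg_one : XRees R F hone hmul hmono ∈ ReesDeg R F hone hmul 1 := by
  classical
  intro i hi
  show (AddMonoidAlgebra.single (1 : ℤ) (1 : R)).coeff i = 0
  rw [AddMonoidAlgebra.coeff_single, Finsupp.single_apply, if_neg (Ne.symm hi)]

theorem XRees_commute (s : ReesSubring R F hone hmul) :
    Commute (XRees R F hone hmul hmono) s :=
  Subtype.ext (LaurentPolynomial.T_mul 1 _)

variable {W W' : Type} [AddCommGroup W] [Module (ReesSubring R F hone hmul) W] [AddCommGroup W']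
  [Module (ReesSubring R F hone hmul) W']

theorem mem_oneSubXSub_iff {w : W} : w ∈ oneSubXSub R F hone hmul hmono W ↔
    w ∈ (AddMonoidHom.id W - DistribSMul.toAddMonoidHom W (XRees R F hone hmul hmono)).range := by
  constructor
  · intro hw
    induction hw using Submodule.span_induction with
    | mem w hw => obtain ⟨v, rfl⟩ := hw; exact ⟨v, rfl⟩
    | zero => exact zero_mem _
    | add _ _ _ _ h₁ h₂ => exact add_mem h₁ h₂
    | smul s w _ h =>
      obtain ⟨v, rfl⟩ := h
      exact ⟨s • v, by simp [smul_sub, smul_smul, (XRees_commute s).eq]⟩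
  · rintro ⟨v, rfl⟩
    exact Submodule.subset_span ⟨v, rfl⟩

theorem map_mem_oneSubXSub (g : W →ₗ[ReesSubring R F hone hmul] W') {w : W}
    (hw : w ∈ oneSubXSub R F hone hmul hmono W) : g w ∈ oneSubXSub R F hone hmul hmono W' := by
  obtain ⟨v, rfl⟩ := mem_oneSubXSub_iff.mp hw
  exact mem_oneSubXSub_iff.mpr ⟨g v, by simp⟩

variable {𝒲 : ℤ → AddSubgroup W}

theorem XRees_smul_mem_of_smul_mem
    (hsmul : ∀ {m n : ℤ} {s : ReesSubring R F hone hmul} {x : W},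
      s ∈ ReesDeg R F hone hmul m → x ∈ 𝒲 n → s • x ∈ 𝒲 (m + n))
    (i : ℤ) (x : W) (hx : x ∈ 𝒲 i) : XRees R F hone hmul hmono • x ∈ 𝒲 (i + 1) :=
  add_comm 1 i ▸ hsmul XRees_mem_ReesDeg_one hx

theorem exists_mem_sub_mem_oneSubXSub [DirectSum.Decomposition 𝒲]
    (hX : ∀ i, ∀ x ∈ 𝒲 i, XRees R F hone hmul hmono • x ∈ 𝒲 (i + 1)) (w : W) :
    ∃ n, ∃ w' ∈ 𝒲 n, w - w' ∈ oneSubXSub R F hone hmul hmono W :=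
  let ⟨n, w', hw', h⟩ := DirectSum.exists_mem_sub_mem_range _ hX w
  ⟨n, w', hw', mem_oneSubXSub_iff.mpr h⟩

theorem eq_zero_of_mem_oneSubXSub [DirectSum.Decomposition 𝒲]
    (hX : ∀ i, ∀ x ∈ 𝒲 i, XRees R F hone hmul hmono • x ∈ 𝒲 (i + 1))
    (htf : ∀ y : W, XRees R F hone hmul hmono • y = 0 → y = 0)
    {n : ℤ} {z : W} (hz : z ∈ 𝒲 n) (h : z ∈ oneSubXSub R F hone hmul hmono W) : z = 0 := by
  obtain ⟨v, rfl⟩ := mem_oneSubXSub_iff.mp h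
  exact DirectSum.eq_zero_of_mem_of_eq_sub_map _ hX
    ((injective_iff_map_eq_zero _).mpr htf) hz rfl

end Rees

theorem stmt_19
    {N₁ N₂ N₃ : Type}
    [AddCommGroup N₁] [Module (ReesSubring R F hone hmul) N₁]
    [AddCommGroup N₂] [Module (ReesSubring R F hone hmul) N₂]
    [AddCommGroup N₃] [Module (ReesSubring R F hone hmul) N₃]
    (𝒩₁ : ℤ → AddSubgroup N₁) (𝒩₂ : ℤ → AddSubgroup N₂) (𝒩₃ : ℤ → AddSubgroup N₃)
    (hint₁ : DirectSum.IsInternal 𝒩₁) (hint₂ : DirectSum.IsInternal 𝒩₂)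
    (hint₃ : DirectSum.IsInternal 𝒩₃)
    (hsmul₂ : ∀ {m n : ℤ} {s : ReesSubring R F hone hmul} {x : N₂},
      s ∈ ReesDeg R F hone hmul m → x ∈ 𝒩₂ n → s • x ∈ 𝒩₂ (m + n))
    (hsmul₃ : ∀ {m n : ℤ} {s : ReesSubring R F hone hmul} {x : N₃},
      s ∈ ReesDeg R F hone hmul m → x ∈ 𝒩₃ n → s • x ∈ 𝒩₃ (m + n))
    (f : N₁ →ₗ[ReesSubring R F hone hmul] N₂)
    (g : N₂ →ₗ[ReesSubring R F hone hmul] N₃)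
    (hfgr : ∀ (n : ℤ) (x : N₁), x ∈ 𝒩₁ n → f x ∈ 𝒩₂ n)
    (hggr : ∀ (n : ℤ) (x : N₂), x ∈ 𝒩₂ n → g x ∈ 𝒩₃ n)
    (hexact : LinearMap.range f = LinearMap.ker g)
    (htf : ∀ y : N₃, XRees R F hone hmul hmono • y = 0 → y = 0) :
    -- exactness of `ℰ(N₁) → ℰ(N₂) → ℰ(N₃)` in the middle:
    (∀ y : N₂, g y ∈ oneSubXSub R F hone hmul hmono N₃ →
      ∃ x : N₁, y - f x ∈ oneSubXSub R F hone hmul hmono N₂) ∧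
    -- strictness of `ℰ(N₁) → ℰ(N₂)`:
    (∀ (n : ℤ) (x₁ : N₁), ∀ y ∈ 𝒩₂ n, f x₁ - y ∈ oneSubXSub R F hone hmul hmono N₂ →
      ∃ x' ∈ 𝒩₁ n, f x' - y ∈ oneSubXSub R F hone hmul hmono N₂) ∧
    -- in particular, if `f` is surjective then `ℰ(f)` is a (strict) surjection:
    (Function.Surjective f →
      ∀ y : N₂, ∃ x : N₁, y - f x ∈ oneSubXSub R F hone hmul hmono N₂) := by
  let _ := hint₁.chooseDecomposition
  let _ := hint₂.chooseDecomposition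
  let _ := hint₃.chooseDecomposition
  have hker : ∀ n, ∀ y ∈ 𝒩₂ n, g y ∈ oneSubXSub R F hone hmul hmono N₃ → ∃ x, f x = y :=
    fun n y hy h => LinearMap.mem_range.mp <| hexact ▸
      eq_zero_of_mem_oneSubXSub (XRees_smul_mem_of_smul_mem @hsmul₃) htf (hggr n y hy) h
  refine ⟨fun y hy => ?_, fun n x₁ y hy h => ?_, fun hsurj y => ?_⟩
  · obtain ⟨n, y', hy', hyy'⟩ :=
      exists_mem_sub_mem_oneSubXSub (XRees_smul_mem_of_smul_mem @hsmul₂) y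
    obtain ⟨x, rfl⟩ := hker n y' hy' (by simpa using sub_mem hy (map_mem_oneSubXSub g hyy'))
    exact ⟨x, hyy'⟩
  · have hgf : g (f x₁) = 0 := LinearMap.mem_ker.mp (hexact ▸ LinearMap.mem_range_self f x₁)
    obtain ⟨x, rfl⟩ := hker n y hy (by simpa [hgf] using map_mem_oneSubXSub g h)
    obtain ⟨x', hx', hfx'⟩ := DirectSum.exists_mem_map_eq_of_map_mem f.toAddMonoidHom hfgr hy
    exact ⟨x', hx', by rw [show f x' = f x from hfx', sub_self]; exact zero_mem _⟩
  · obtain ⟨x, rfl⟩ := hsurj y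
    exact ⟨x, by simp⟩

end
end
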